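/- arXiv:2007.14192 — 7 statements merged into one kernel-verified Lean document; each statement's English description precedes it below -/
import Mathlib

section
/- In a K4-free bridged graph G, no sphere S_k(u) = {v : d_G(u,v) = k} contains three pairwise adjacent vertices. -/
open SimpleGraph

variable {V : Type*}

/-- The metric interval between `u` and `v`. -/
def interval (G : SimpleGraph V) (u v : V) : Set V :=
  {w | G.dist u w + G.dist w v = G.dist u v}

/-- Triangle condition (TC). -/
def TriangleCondition (G : SimpleGraph V) : Prop :=
  ∀ (k : ℕ) (u v w : V), G.dist u v = k + 1 → G.dist u w = k + 1 → G.Adj v w →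
    ∃ x, G.dist u x = k ∧ G.Adj x v ∧ G.Adj x w

/-- Quadrangle condition (QC). -/
def QuadrangleCondition (G : SimpleGraph V) : Prop :=
  ∀ (k : ℕ) (u v w z : V), G.dist u v = k + 1 → G.dist u w = k + 1 →
    G.dist u z = k + 2 → G.Adj v z → G.Adj w z →
    ∃ x, G.dist u x = k ∧ G.Adj x v ∧ G.Adj x w

def WeaklyModular (G : SimpleGraph V) : Prop :=
  TriangleCondition G ∧ QuadrangleCondition G

/-- No induced 4-cycle. -/
def NoInducedC4 (G : SimpleGraph V) : Prop :=
  ¬ ∃ a b c d : V, G.Adj a b ∧ G.Adj b c ∧ G.Adj c d ∧ G.Adj d a ∧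
    a ≠ c ∧ b ≠ d ∧ ¬ G.Adj a c ∧ ¬ G.Adj b d

/-- No induced 5-cycle. -/
def NoInducedC5 (G : SimpleGraph V) : Prop :=
  ¬ ∃ a b c d e : V, G.Adj a b ∧ G.Adj b c ∧ G.Adj c d ∧ G.Adj d e ∧ G.Adj e a ∧
    a ≠ c ∧ a ≠ d ∧ b ≠ d ∧ b ≠ e ∧ c ≠ e ∧
    ¬ G.Adj a c ∧ ¬ G.Adj a d ∧ ¬ G.Adj b d ∧ ¬ G.Adj b e ∧ ¬ G.Adj c e

/-- Bridged graph: weakly modular with no induced `C₄` or `C₅`. -/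
def Bridged (G : SimpleGraph V) : Prop :=
  WeaklyModular G ∧ NoInducedC4 G ∧ NoInducedC5 G

/-- No clique on four vertices. -/
def K4Free (G : SimpleGraph V) : Prop :=
  ¬ ∃ a b c d : V, G.Adj a b ∧ G.Adj a c ∧ G.Adj a d ∧ G.Adj b c ∧ G.Adj b d ∧ G.Adj c d

/-- Closed neighborhood `N[z]`. -/
def closedNbhd (G : SimpleGraph V) (z : V) : Set V := insert z (G.neighborSet z)

/-- Metric projection of `u` on a set `A`. -/
def mproj (G : SimpleGraph V) (u : V) (A : Set V) : Set V :=
  {a ∈ A | ∀ b ∈ A, G.dist u a ≤ G.dist u b}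

/-- The star `St(z)`: `N[z]` together with all vertices outside `N[z]` having two
adjacent neighbors in `N[z]`. -/
def starSet (G : SimpleGraph V) (z : V) : Set V :=
  closedNbhd G z ∪
    {u | u ∉ closedNbhd G z ∧ ∃ y y', G.Adj y y' ∧ G.Adj z y ∧ G.Adj z y' ∧ G.Adj u y ∧ G.Adj u y'}

/-- The panel of a neighbor `x` of `z`: vertices with unique projection `x` on `N[z]`. -/
def panelFiber (G : SimpleGraph V) (z x : V) : Set V :=
  {u | mproj G u (closedNbhd G z) = {x}}

/-- The cone of a vertex `x` at distance 2 from `z` in `St(z)`. -/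
def coneFiber (G : SimpleGraph V) (z x : V) : Set V :=
  {u | ∃ y y', y ≠ y' ∧ G.Adj y y' ∧ G.Adj z y ∧ G.Adj z y' ∧ G.Adj x y ∧ G.Adj x y' ∧
    mproj G u (closedNbhd G z) = {y, y'} ∧ G.dist u x + 1 = G.dist u y}

/-- The fiber of `x ∈ St(z)`: a panel if `x ~ z`, a cone otherwise. -/
def fiberSet (G : SimpleGraph V) (z x : V) : Set V :=
  {u | (G.Adj x z ∧ u ∈ panelFiber G z x) ∨ (¬ G.Adj x z ∧ u ∈ coneFiber G z x)}

/-- Total boundary of a fiber `F`: the vertices of `F` with a neighbor outside `F`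
(i.e. in another fiber of the partition). -/
def totalBoundary (G : SimpleGraph V) (F : Set V) : Set V :=
  {u ∈ F | ∃ v, G.Adj u v ∧ v ∉ F}

/-- `S` is starshaped with respect to `x`. -/
def StarshapedWrt (G : SimpleGraph V) (x : V) (S : Set V) : Prop :=
  ∀ s ∈ S, interval G x s ⊆ S

/-- `S` is a starshaped tree rooted at `x`: intervals to the root are contained in `S`
and each non-root vertex has a unique neighbor towards the root. -/
def StarshapedTree (G : SimpleGraph V) (x : V) (S : Set V) : Prop :=
  x ∈ S ∧ (∀ s ∈ S, interval G x s ⊆ S) ∧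
    (∀ s ∈ S, s ≠ x → ∃! w, w ∈ interval G s x ∧ G.Adj s w)

/-- The tree obtained as the union of the branches of a starshaped tree `S` rooted
at `x`: its edges are the edges of `G` lying consecutively on some branch. -/
def branchTree (G : SimpleGraph V) (x : V) (S : Set V) : SimpleGraph V :=
  SimpleGraph.fromRel (fun u v => G.Adj u v ∧ u ∈ S ∧ v ∈ S ∧
    ∃ s ∈ S, u ∈ interval G x s ∧ v ∈ interval G x s ∧ G.dist x v = G.dist x u + 1)

/-- Metric triangle. -/
def MetricTriangle (G : SimpleGraph V) (u1 u2 u3 : V) : Prop :=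
  interval G u1 u2 ∩ interval G u2 u3 = {u2} ∧
  interval G u2 u3 ∩ interval G u3 u1 = {u3} ∧
  interval G u3 u1 ∩ interval G u1 u2 = {u1}

/-- In a K4-free bridged graph, no sphere `S_k(u)` contains three pairwise
adjacent vertices. -/
theorem stmt0 (G : SimpleGraph V) (hc : G.Connected) (hb : Bridged G) (hk4 : K4Free G)
    (u x1 x2 x3 : V) (k : ℕ)
    (h1 : G.dist u x1 = k) (h2 : G.dist u x2 = k) (h3 : G.dist u x3 = k) :
    ¬ (G.Adj x1 x2 ∧ G.Adj x2 x3 ∧ G.Adj x1 x3) := by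
  rintro ⟨h12, h23, h13⟩
  have hstep : ∀ a b : V, G.Adj a b → G.dist u b ≤ G.dist u a + 1 := by
    intro a b hab
    calc G.dist u b ≤ G.dist u a + G.dist a b := hc.dist_triangle
    _ = G.dist u a + 1 := by rw [dist_eq_one_iff_adj.mpr hab]
  match k with
  | 0 =>
    have e1 : u = x1 := hc.dist_eq_zero_iff.mp h1
    have e2 : u = x2 := hc.dist_eq_zero_iff.mp h2
    exact G.irrefl (e1 ▸ e2 ▸ h12)
  | 1 =>
    have a1 : G.Adj u x1 := dist_eq_one_iff_adj.mp h1
    have a2 : G.Adj u x2 := dist_eq_one_iff_adj.mp h2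
    have a3 : G.Adj u x3 := dist_eq_one_iff_adj.mp h3
    exact hk4 ⟨u, x1, x2, x3, a1, a2, a3, h12, h13, h23⟩
  | (m + 2) =>
    obtain ⟨⟨tc, qc⟩, nc4, nc5⟩ := hb
    obtain ⟨y12, hy12d, hy12a, hy12b⟩ := tc (m + 1) u x1 x2 h1 h2 h12
    obtain ⟨y23, hy23d, hy23a, hy23b⟩ := tc (m + 1) u x2 x3 h2 h3 h23
    -- y12 not adjacent to x3, else K4
    have hny12x3 : ¬ G.Adj y12 x3 := fun h =>
      hk4 ⟨y12, x1, x2, x3, hy12a, hy12b, h, h12, h13, h23⟩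
    have hny23x1 : ¬ G.Adj y23 x1 := fun h =>
      hk4 ⟨y23, x1, x2, x3, h, hy23a, hy23b, h12, h13, h23⟩
    have hne : y12 ≠ y23 := fun h => hny12x3 (h ▸ hy23b)
    -- distance-gap helpers
    have gap : ∀ a b : V, G.dist u a = m → G.dist u b = m + 2 → ¬ G.Adj a b ∧ a ≠ b := by
      intro a b ha hb
      constructor
      · intro h
        have := hstep a b h
        omega
      · intro h; subst h; omega
    have gap1 : ∀ a b : V, G.dist u a = m + 1 → G.dist u b = m + 2 → a ≠ b := by
      intro a b ha hb h; subst h; omega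
    obtain ⟨t, htd, hta, htb⟩ := qc m u y12 y23 x2 hy12d hy23d h2 hy12b hy23a
    by_cases hyy : G.Adj y12 y23
    · -- induced C4 : y12, x1, x3, y23
      exact nc4 ⟨y12, x1, x3, y23, hy12a, h13, hy23b.symm, hyy.symm,
        gap1 y12 x3 hy12d h3, (gap1 y23 x1 hy23d h1).symm, hny12x3,
        fun h => hny23x1 h.symm⟩
    · -- induced C5 : t, y12, x1, x3, y23
      obtain ⟨hnt1, hnet1⟩ := gap t x1 htd h1
      obtain ⟨hnt3, hnet3⟩ := gap t x3 htd h3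
      exact nc5 ⟨t, y12, x1, x3, y23, hta, hy12a, h13, hy23b.symm, htb.symm,
        hnet1, hnet3, gap1 y12 x3 hy12d h3, hne, (gap1 y23 x1 hy23d h1).symm,
        hnt1, hnt3, hny12x3, hyy, fun h => hny23x1 h.symm⟩
end

section
/- Every triple u1,u2,u3 of vertices of a connected graph G admits a quasi-median: a metric triangle u1'u2'u3' such that for each pair i<j there is a shortest (ui,uj)-path passing through ui' and uj'. -/
open SimpleGraph

variable {V : Type*}

private lemma nat_exists_max (B : ℕ) (P : ℕ → Prop) (h : ∃ n, P n ∧ n ≤ B) :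
    ∃ m, P m ∧ m ≤ B ∧ ∀ n, P n → n ≤ B → n ≤ m := by
  induction B with
  | zero =>
    obtain ⟨n, hn, hnB⟩ := h
    exact ⟨0, by simpa [Nat.le_zero.mp hnB] using hn, le_refl _,
      fun n _ hn => hn⟩
  | succ B ih =>
    by_cases hB : P (B + 1)
    · exact ⟨B + 1, hB, le_refl _, fun n _ hn => hn⟩
    · obtain ⟨n, hn, hnB⟩ := h
      have hn' : n ≤ B := by
        rcases Nat.lt_succ_iff_lt_or_eq.mp (Nat.lt_succ_of_le hnB) with h1 | h1
        · omega
        · exact absurd (h1 ▸ hn) hB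
      obtain ⟨m, hm, hmB, hmax⟩ := ih ⟨n, hn, hn'⟩
      refine ⟨m, hm, le_trans hmB (Nat.le_succ _), fun k hk hkB => ?_⟩
      have hk' : k ≤ B := by
        rcases Nat.lt_succ_iff_lt_or_eq.mp (Nat.lt_succ_of_le hkB) with h1 | h1
        · omega
        · exact absurd (h1 ▸ hk) hB
      exact hmax k hk hk'

/-- In a set on which `dist u` is bounded, there is a vertex furthest from `u`. -/
private lemma exists_furthest (G : SimpleGraph V) (u : V) (S : Set V) (B : ℕ)
    (hne : S.Nonempty) (hb : ∀ x ∈ S, G.dist u x ≤ B) :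
    ∃ x ∈ S, ∀ y ∈ S, G.dist u y ≤ G.dist u x := by
  obtain ⟨x0, hx0⟩ := hne
  obtain ⟨m, ⟨x, hxS, hxd⟩, _, hmax⟩ :=
    nat_exists_max B (fun n => ∃ x ∈ S, G.dist u x = n)
      ⟨G.dist u x0, ⟨x0, hx0, rfl⟩, hb x0 hx0⟩
  refine ⟨x, hxS, fun y hy => ?_⟩
  rw [hxd]
  exact hmax _ ⟨y, hy, rfl⟩ (hb y hy)

/-- Every triple of vertices of a connected graph admits a quasi-median. -/
theorem stmt2 (G : SimpleGraph V) (hc : G.Connected) (u1 u2 u3 : V) :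
    ∃ q1 q2 q3 : V, MetricTriangle G q1 q2 q3 ∧
      G.dist u1 u2 = G.dist u1 q1 + G.dist q1 q2 + G.dist q2 u2 ∧
      G.dist u1 u3 = G.dist u1 q1 + G.dist q1 q3 + G.dist q3 u3 ∧
      G.dist u2 u3 = G.dist u2 q2 + G.dist q2 q3 + G.dist q3 u3 := by
  classical
  -- helper: transitivity of intervals
  have A : ∀ u v q x : V, G.dist u q + G.dist q v = G.dist u v →
      G.dist u x + G.dist x q = G.dist u q →
      G.dist u x + G.dist x v = G.dist u v ∧ G.dist x v = G.dist x q + G.dist q v := by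
    intro u v q x h1 h2
    have t1 := hc.dist_triangle (u := x) (v := q) (w := v)
    have t2 := hc.dist_triangle (u := u) (v := x) (w := v)
    omega
  have B : ∀ u v q x : V, G.dist u q + G.dist q v = G.dist u v →
      G.dist q x + G.dist x v = G.dist q v →
      G.dist u x + G.dist x v = G.dist u v ∧ G.dist u x = G.dist u q + G.dist q x := by
    intro u v q x h1 h2
    have t1 := hc.dist_triangle (u := u) (v := q) (w := x)
    have t2 := hc.dist_triangle (u := u) (v := x) (w := v)
    omega
  -- Step 1: q1
  obtain ⟨q1, hq1S, max1⟩ := exists_furthest G u1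
      (interval G u1 u2 ∩ interval G u1 u3) (G.dist u1 u2)
      ⟨u1, by simp [interval]⟩
      (fun x hx => by
        have h := hx.1
        simp only [interval, Set.mem_setOf_eq] at h
        omega)
  obtain ⟨hq1a, hq1b⟩ : (G.dist u1 q1 + G.dist q1 u2 = G.dist u1 u2) ∧
      (G.dist u1 q1 + G.dist q1 u3 = G.dist u1 u3) := hq1S
  -- Step 2: q2
  obtain ⟨q2, hq2S, max2⟩ := exists_furthest G u2
      (interval G q1 u2 ∩ interval G u2 u3) (G.dist q1 u2)
      ⟨u2, by simp [interval]⟩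
      (fun x hx => by
        have h := hx.1
        simp only [interval, Set.mem_setOf_eq] at h
        have := G.dist_comm (u := u2) (v := x)
        omega)
  obtain ⟨hq2a, hq2b⟩ : (G.dist q1 q2 + G.dist q2 u2 = G.dist q1 u2) ∧
      (G.dist u2 q2 + G.dist q2 u3 = G.dist u2 u3) := hq2S
  -- Step 3: q3
  obtain ⟨q3, hq3S, max3⟩ := exists_furthest G u3
      (interval G q1 u3 ∩ interval G q2 u3) (G.dist q1 u3)
      ⟨u3, by simp [interval]⟩
      (fun x hx => by
        have h := hx.1
        simp only [interval, Set.mem_setOf_eq] at h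
        have := G.dist_comm (u := u3) (v := x)
        omega)
  obtain ⟨hq3a, hq3b⟩ : (G.dist q1 q3 + G.dist q3 u3 = G.dist q1 u3) ∧
      (G.dist q2 q3 + G.dist q3 u3 = G.dist q2 u3) := hq3S
  refine ⟨q1, q2, q3, ⟨?_, ?_, ?_⟩, by omega, by omega, by omega⟩
  · -- I(q1,q2) ∩ I(q2,q3) = {q2}
    ext x
    simp only [interval, Set.mem_inter_iff, Set.mem_setOf_eq, Set.mem_singleton_iff]
    constructor
    · rintro ⟨hx1, hx2⟩
      -- x ∈ I(q1,u2), with d u2 x = d u2 q2 + d q2 x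
      obtain ⟨hxa, hxb⟩ := A q1 u2 q2 x hq2a hx1
      have hcomm1 := G.dist_comm (u := u2) (v := x)
      have hcomm2 := G.dist_comm (u := u2) (v := q2)
      -- x ∈ I(q2,u3)
      obtain ⟨hxc, _⟩ := A q2 u3 q3 x hq3b hx2
      -- x ∈ I(u2,u3)
      obtain ⟨hxd, _⟩ := B u2 u3 q2 x hq2b hxc
      have hle := max2 x ⟨hxa, hxd⟩
      have hzero : G.dist q2 x = 0 := by
        have := G.dist_comm (u := q2) (v := x)
        omega
      exact (hc.dist_eq_zero_iff).mp hzero |>.symm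
    · rintro rfl
      simp [SimpleGraph.dist_self, G.dist_comm]
  · -- I(q2,q3) ∩ I(q3,q1) = {q3}
    ext x
    simp only [interval, Set.mem_inter_iff, Set.mem_setOf_eq, Set.mem_singleton_iff]
    constructor
    · rintro ⟨hx1, hx2⟩
      -- turn x ∈ I(q3,q1) into x ∈ I(q1,q3)
      have hx2' : G.dist q1 x + G.dist x q3 = G.dist q1 q3 := by
        have h1 := G.dist_comm (u := q3) (v := x)
        have h2 := G.dist_comm (u := x) (v := q1)
        have h3 := G.dist_comm (u := q3) (v := q1)
        omega
      obtain ⟨hxa, hxb⟩ := A q1 u3 q3 x hq3a hx2'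
      obtain ⟨hxc, _⟩ := A q2 u3 q3 x hq3b hx1
      have hle := max3 x ⟨hxa, hxc⟩
      have hzero : G.dist q3 x = 0 := by
        have c1 := G.dist_comm (u := u3) (v := x)
        have c2 := G.dist_comm (u := u3) (v := q3)
        have c3 := G.dist_comm (u := q3) (v := x)
        omega
      exact (hc.dist_eq_zero_iff).mp hzero |>.symm
    · rintro rfl
      simp [SimpleGraph.dist_self, G.dist_comm]
  · -- I(q3,q1) ∩ I(q1,q2) = {q1}
    ext x
    simp only [interval, Set.mem_inter_iff, Set.mem_setOf_eq, Set.mem_singleton_iff]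
    constructor
    · rintro ⟨hx1, hx2⟩
      -- x ∈ I(q1,u2), then x ∈ I(u1,u2) with d u1 x = d u1 q1 + d q1 x
      obtain ⟨hxa, _⟩ := A q1 u2 q2 x hq2a hx2
      obtain ⟨hxb, hxb'⟩ := B u1 u2 q1 x hq1a hxa
      -- from x ∈ I(q3,q1): x ∈ I(q1,q3), then x ∈ I(q1,u3), then x ∈ I(u1,u3)
      have hx1' : G.dist q1 x + G.dist x q3 = G.dist q1 q3 := by
        have h1 := G.dist_comm (u := q3) (v := x)
        have h2 := G.dist_comm (u := x) (v := q1)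
        have h3 := G.dist_comm (u := q3) (v := q1)
        omega
      obtain ⟨hxc, _⟩ := A q1 u3 q3 x hq3a hx1'
      obtain ⟨hxd, _⟩ := B u1 u3 q1 x hq1b hxc
      have hle := max1 x ⟨hxb, hxd⟩
      have hzero : G.dist q1 x = 0 := by omega
      exact (hc.dist_eq_zero_iff).mp hzero |>.symm
    · rintro rfl
      simp [SimpleGraph.dist_self, G.dist_comm]
end

section
/- In a K4-free bridged graph G, for every vertex z and every vertex u not in N[z], the metric projection of u on N[z] consists either of a single vertex or of two adjacent vertices, and z itself never belongs to this projection. -/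
open SimpleGraph

variable {V : Type*}

lemma exists_adj_dist_pred (G : SimpleGraph V) (hc : G.Connected) (u z : V) {n : ℕ}
    (h : G.dist u z = n + 1) : ∃ y, G.Adj z y ∧ G.dist u y = n := by
  obtain ⟨p, hp⟩ := (hc u z).exists_walk_length_eq_dist
  have hrev : p.reverse.length = n + 1 := by rw [SimpleGraph.Walk.length_reverse, hp, h]
  cases hq : p.reverse with
  | nil => rw [hq] at hrev; simp at hrev
  | cons hadj q =>
    rename_i y
    refine ⟨y, hadj, le_antisymm ?_ ?_⟩
    · have h1 : G.dist u y ≤ q.reverse.length := G.dist_le q.reverse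
      rw [SimpleGraph.Walk.length_reverse] at h1
      have h2 : q.length = n := by rw [hq] at hrev; simpa using hrev
      omega
    · have h3 := hc.dist_triangle (u := u) (v := y) (w := z)
      have hyz : G.dist y z ≤ 1 := by
        rw [SimpleGraph.dist_comm]
        exact le_of_eq (SimpleGraph.dist_eq_one_iff_adj.mpr hadj)
      omega

/-- The metric projection of `u ∉ N[z]` on `N[z]` is a single vertex or two
adjacent vertices, and never contains `z`. -/
theorem stmt3 (G : SimpleGraph V) (hc : G.Connected) (hb : Bridged G) (hk4 : K4Free G)
    (z u : V) (hu : u ∉ closedNbhd G z) :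
    z ∉ mproj G u (closedNbhd G z) ∧
      ((∃ y : V, mproj G u (closedNbhd G z) = {y}) ∨
        (∃ y y' : V, y ≠ y' ∧ G.Adj y y' ∧ mproj G u (closedNbhd G z) = {y, y'})) := by
  classical
  have huA : u ≠ z ∧ ¬ G.Adj z u := by
    constructor
    · intro h; exact hu (by simp [closedNbhd, h])
    · intro h; exact hu (by simp [closedNbhd, h])
  have hdz0 : 0 < G.dist u z := hc.pos_dist_of_ne huA.1
  obtain ⟨n, hn⟩ : ∃ n, G.dist u z = n + 1 := ⟨G.dist u z - 1, by omega⟩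
  obtain ⟨y0, hy0adj, hy0⟩ := exists_adj_dist_pred G hc u z hn
  have hy0A : y0 ∈ closedNbhd G z := by simp [closedNbhd, hy0adj]
  set A := closedNbhd G z with hA
  set S : Set ℕ := {m | ∃ a ∈ A, G.dist u a = m} with hS
  have hSne : S.Nonempty := ⟨n, y0, hy0A, hy0⟩
  set k := sInf S with hk
  obtain ⟨a, haA, hak⟩ : ∃ a ∈ A, G.dist u a = k := Nat.sInf_mem hSne
  have hmin : ∀ b ∈ A, k ≤ G.dist u b := fun b hb => Nat.sInf_le ⟨b, hb, rfl⟩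
  have hkn : k ≤ n := by have := hmin y0 hy0A; omega
  have hchar : ∀ e, e ∈ mproj G u A ↔ (e ∈ A ∧ G.dist u e = k) := by
    intro e
    constructor
    · rintro ⟨heA, hm⟩
      exact ⟨heA, le_antisymm (hak ▸ hm a haA) (hmin e heA)⟩
    · rintro ⟨heA, he⟩
      exact ⟨heA, fun b hb => he ▸ hmin b hb⟩
  have hz : z ∉ mproj G u A := by
    intro hzm
    have := ((hchar z).mp hzm).2
    omega
  have hk1 : 1 ≤ k := by
    rcases Nat.eq_zero_or_pos k with h0 | h1
    · exfalso
      have : u = a := (hc.dist_eq_zero_iff).mp (by omega)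
      exact hu (this ▸ haA)
    · exact h1
  have hadjz : ∀ e ∈ mproj G u A, G.Adj z e := by
    intro e he
    have heA := ((hchar e).mp he).1
    rcases heA with rfl | h
    · exact absurd he hz
    · exact h
  have hdz2 : G.dist u z = k + 1 := by
    have h1 : G.dist u z ≤ G.dist u a + G.dist a z := hc.dist_triangle
    have h2 : G.dist a z = 1 := SimpleGraph.dist_eq_one_iff_adj.mpr (hadjz a ((hchar a).mpr ⟨haA, hak⟩)).symm
    omega
  have hpair : ∀ y y', y ∈ mproj G u A → y' ∈ mproj G u A → y ≠ y' → G.Adj y y' := by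
    intro y y' hy hy' hne
    by_contra hna
    obtain ⟨k', hk'⟩ : ∃ k', k = k' + 1 := ⟨k - 1, by omega⟩
    obtain ⟨x, hxd, hxy, hxy'⟩ := hb.1.2 k' u y y' z
      (by rw [((hchar y).mp hy).2, hk']) (by rw [((hchar y').mp hy').2, hk'])
      (by rw [hdz2, hk']) (hadjz y hy).symm (hadjz y' hy').symm
    have hzx : z ≠ x := by rintro rfl; omega
    have hznx : ¬ G.Adj z x := by
      intro h
      have := hmin x (by simp [hA, closedNbhd, h])
      omega
    exact hb.2.1 ⟨y, z, y', x, (hadjz y hy).symm, hadjz y' hy', hxy'.symm, hxy, hne, hzx, hna, hznx⟩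
  refine ⟨hz, ?_⟩
  by_cases hone : ∀ e ∈ mproj G u A, e = a
  · left
    exact ⟨a, Set.eq_singleton_iff_unique_mem.mpr ⟨(hchar a).mpr ⟨haA, hak⟩, hone⟩⟩
  · push_neg at hone
    obtain ⟨y', hy', hne⟩ := hone
    right
    have ham : a ∈ mproj G u A := (hchar a).mpr ⟨haA, hak⟩
    refine ⟨a, y', Ne.symm hne, hpair a y' ham hy' (Ne.symm hne), ?_⟩
    ext e
    simp only [Set.mem_insert_iff, Set.mem_singleton_iff]
    constructor
    · intro he
      by_contra hcon
      push_neg at hcon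
      exact hk4 ⟨z, a, y', e, hadjz a ham, hadjz y' hy', hadjz e he,
        hpair a y' ham hy' (Ne.symm hne), hpair a e ham he (Ne.symm hcon.1),
        hpair y' e hy' he (Ne.symm hcon.2)⟩
    · rintro (rfl | rfl)
      · exact ham
      · exact hy'
end

section
/- In a K4-free bridged graph G, for any two vertices u, v at distance ℓ and any 0 ≤ i ≤ ℓ, the level set C_i = {w ∈ I(u,v) : d_G(u,w) = i} is convex and induces a path in G. -/
open SimpleGraph

variable {V : Type*}

section AuxLemmas
variable {G : SimpleGraph V}

private lemma adj_dist {x y : V} (h : G.Adj x y) : G.dist x y = 1 :=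
  dist_eq_one_iff_adj.mpr h

private lemma dist_le_adj (hc : G.Connected) {x y : V} (h : G.Adj x y) (u : V) :
    G.dist u x ≤ G.dist u y + 1 := by
  have h1 := hc.dist_triangle (u := u) (v := y) (w := x)
  have h2 : G.dist y x = 1 := adj_dist h.symm
  omega

private lemma walk_getVert_dist (hc : G.Connected) {x y : V} (p : G.Walk x y) (m : ℕ) :
    G.dist x (p.getVert m) ≤ m ∧ G.dist (p.getVert m) y ≤ p.length - m := by
  induction p generalizing m with
  | nil => simp [SimpleGraph.Walk.getVert, SimpleGraph.dist_self]
  | @cons a b c h q ih =>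
    cases m with
    | zero =>
      simp only [Walk.getVert_zero, Nat.sub_zero]
      exact ⟨by simp, by simpa using SimpleGraph.dist_le (Walk.cons h q)⟩
    | succ m =>
      have h1 := (ih m).1
      have h2 := (ih m).2
      have h3 := dist_le_adj hc h ((Walk.cons h q).getVert (m+1))
      constructor
      · have : (Walk.cons h q).getVert (m+1) = q.getVert m := rfl
        rw [this] at h3 ⊢
        have := hc.dist_triangle (u := a) (v := b) (w := q.getVert m)
        have hab : G.dist a b = 1 := adj_dist h
        omega
      · have : (Walk.cons h q).getVert (m+1) = q.getVert m := rfl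
        rw [this]
        simpa using h2.trans (by omega)

private lemma exists_step (hc : G.Connected) {x y : V} (hxy : x ≠ y) :
    ∃ z, G.Adj x z ∧ 1 + G.dist z y = G.dist x y := by
  obtain ⟨p, hp⟩ := hc.exists_walk_length_eq_dist x y
  have hpos : 0 < G.dist x y := hc.pos_dist_of_ne hxy
  have hlen : 0 < p.length := by omega
  have hadj := p.adj_getVert_succ hlen
  rw [p.getVert_zero] at hadj
  have h1 := (walk_getVert_dist hc p 1).2
  have h2 := dist_le_adj hc hadj.symm y
  refine ⟨p.getVert 1, hadj, ?_⟩
  have h3 := hc.dist_triangle (u := x) (v := p.getVert 1) (w := y)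
  have h4 : G.dist x (p.getVert 1) = 1 := adj_dist hadj
  omega

private lemma exists_midvertex (hc : G.Connected) {x y : V} {m : ℕ} (hm : m ≤ G.dist x y) :
    ∃ z, G.dist x z = m ∧ G.dist z y = G.dist x y - m := by
  obtain ⟨p, hp⟩ := hc.exists_walk_length_eq_dist x y
  obtain ⟨h1, h2⟩ := walk_getVert_dist hc p m
  have h3 := hc.dist_triangle (u := x) (v := p.getVert m) (w := y)
  exact ⟨p.getVert m, by omega, by omega⟩

private lemma ne_of_udist {u x y : V} (h : G.dist u x ≠ G.dist u y) : x ≠ y := by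
  rintro rfl; exact h rfl

private lemma not_adj_far (hc : G.Connected) {u x y : V} (h : G.dist u x + 2 ≤ G.dist u y) :
    ¬ G.Adj x y := fun ha => by have := dist_le_adj hc ha.symm u; omega

private lemma local_conv (hc : G.Connected) (hqc : QuadrangleCondition G) (hc4 : NoInducedC4 G)
    {u a b w : V} {k : ℕ} (ha : G.dist u a = k) (hb : G.dist u b = k)
    (hw : G.dist u w = k + 1) (hwa : G.Adj w a) (hwb : G.Adj w b) (hab : a ≠ b) :
    G.Adj a b := by
  cases k with
  | zero =>
    obtain rfl : u = a := (hc.dist_eq_zero_iff).mp ha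
    obtain rfl : u = b := (hc.dist_eq_zero_iff).mp hb
    exact (hab rfl).elim
  | succ k' =>
    obtain ⟨x, hx, hxa, hxb⟩ := hqc k' u a b w ha hb hw hwa.symm hwb.symm
    by_contra hnadj
    refine hc4 ⟨a, w, b, x, hwa.symm, hwb, hxb.symm, hxa, hab, ?_, hnadj, ?_⟩
    · exact ne_of_udist (G := G) (u := u) (by omega)
    · exact fun h => not_adj_far hc (u := u) (by omega) h.symm

private lemma step_bound (hc : G.Connected) (htc : TriangleCondition G)
    (hqc : QuadrangleCondition G) (hc4 : NoInducedC4 G) (u : V) :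
    ∀ t k x y x1, G.dist u x ≤ k → G.dist u y ≤ k → G.Adj x x1 →
      1 + G.dist x1 y = G.dist x y → G.dist x1 y = t → G.dist u x1 ≤ k := by
  intro t
  induction t using Nat.strong_induction_on with
  | _ t ih =>
  intro k x y x1 hx hy hadj hint ht
  by_contra hgt
  push_neg at hgt
  have hux1 : G.dist u x1 ≤ G.dist u x + 1 := dist_le_adj hc hadj.symm u
  have hx1 : G.dist u x1 = k + 1 := by omega
  have hxk : G.dist u x = k := by omega
  cases t with
  | zero =>
    obtain rfl : x1 = y := (hc.dist_eq_zero_iff).mp ht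
    omega
  | succ t' =>
    have hx1y : x1 ≠ y := by
      intro h; rw [h, SimpleGraph.dist_self] at ht; omega
    obtain ⟨y1, hadj1, hint1⟩ := exists_step hc hx1y
    have hy1 : G.dist y1 y = t' := by omega
    have hdxy : G.dist x y = t' + 2 := by omega
    have hdxy1 : G.dist x y1 = 2 := by
      have h1 := hc.dist_triangle (u := x) (v := x1) (w := y1)
      have h2 := hc.dist_triangle (u := x) (v := y1) (w := y)
      have h3 : G.dist x x1 = 1 := adj_dist hadj
      have h4 : G.dist x1 y1 = 1 := adj_dist hadj1
      omega
    have hxney1 : x ≠ y1 := by intro h; rw [h, SimpleGraph.dist_self] at hdxy1; omega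
    have hy1le : G.dist u y1 ≤ k + 1 :=
      ih t' (by omega) (k + 1) x1 y y1 (by omega) (by omega) hadj1 (by omega) hy1
    rcases Nat.lt_or_ge (G.dist u y1) (k + 1) with hcase | hcase
    · have huy1 : G.dist u y1 = k := by
        have := dist_le_adj hc hadj1 u
        omega
      have := local_conv hc hqc hc4 hxk huy1 hx1 hadj.symm hadj1 hxney1
      have := adj_dist this
      omega
    · have hy1k : G.dist u y1 = k + 1 := le_antisymm hy1le hcase
      obtain ⟨s, hs, hsx1, hsy1⟩ := htc k u x1 y1 hx1 hy1k hadj1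
      have hxs : x ≠ s := by
        rintro rfl
        exact absurd (adj_dist hsy1) (by omega)
      have hadjxs : G.Adj x s := local_conv hc hqc hc4 hxk hs hx1 hadj.symm hsx1.symm hxs
      have hsy : G.dist s y = t' + 1 := by
        have h1 := hc.dist_triangle (u := s) (v := y1) (w := y)
        have h2 := hc.dist_triangle (u := x) (v := s) (w := y)
        have h3 : G.dist s y1 = 1 := adj_dist hsy1
        have h4 : G.dist x s = 1 := adj_dist hadjxs
        omega
      have : G.dist u y1 ≤ k :=
        ih t' (by omega) k s y y1 (by omega) hy hsy1 (by omega) hy1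
      omega

private lemma ball_convex (hc : G.Connected) (htc : TriangleCondition G)
    (hqc : QuadrangleCondition G) (hc4 : NoInducedC4 G) (u : V) :
    ∀ m x y w, G.dist x y = m → G.dist x w + G.dist w y = G.dist x y →
      G.dist u w ≤ max (G.dist u x) (G.dist u y) := by
  intro m
  induction m using Nat.strong_induction_on with
  | _ m ih =>
  intro x y w hm hw
  rcases Nat.eq_zero_or_pos (G.dist x w) with h0 | hpos
  · obtain rfl : x = w := (hc.dist_eq_zero_iff).mp h0
    exact le_max_left _ _
  · have hxw : x ≠ w := by
      intro h; rw [h, SimpleGraph.dist_self] at hpos; omega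
    obtain ⟨x1, hadj, hstep⟩ := exists_step hc hxw
    have hx1y : G.dist x1 y = m - 1 := by
      have h1 := hc.dist_triangle (u := x1) (v := w) (w := y)
      have h2 := hc.dist_triangle (u := x) (v := x1) (w := y)
      have h3 : G.dist x x1 = 1 := adj_dist hadj
      omega
    have hm1 : 1 ≤ m := by omega
    have hx1k : G.dist u x1 ≤ max (G.dist u x) (G.dist u y) :=
      step_bound hc htc hqc hc4 u (G.dist x1 y) (max (G.dist u x) (G.dist u y)) x y x1
        (le_max_left _ _) (le_max_right _ _) hadj (by omega) rfl
    have hrec : G.dist u w ≤ max (G.dist u x1) (G.dist u y) :=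
      ih (m - 1) (by omega) x1 y w (by omega) (by omega)
    have := le_max_right (G.dist u x) (G.dist u y)
    omega

private lemma no_level_triangle (hc : G.Connected) (htc : TriangleCondition G)
    (hqc : QuadrangleCondition G) (hc4 : NoInducedC4 G) (hc5 : NoInducedC5 G)
    (hk4 : K4Free G) (u : V) {a b c : V} {i : ℕ}
    (ha : G.dist u a = i) (hb : G.dist u b = i) (hcc : G.dist u c = i)
    (hab : G.Adj a b) (hbc : G.Adj b c) (hac : G.Adj a c) : False := by
  cases i with
  | zero =>
    obtain rfl : u = a := (hc.dist_eq_zero_iff).mp ha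
    obtain rfl : u = b := (hc.dist_eq_zero_iff).mp hb
    exact hab.ne rfl
  | succ j =>
    obtain ⟨x, hx, hxa, hxb⟩ := htc j u a b ha hb hab
    obtain ⟨y, hy, hyb, hyc⟩ := htc j u b c hb hcc hbc
    by_cases hxc : G.Adj x c
    · exact hk4 ⟨x, a, b, c, hxa, hxb, hxc, hab, hac, hbc⟩
    by_cases hya : G.Adj y a
    · exact hk4 ⟨y, a, b, c, hya, hyb, hyc, hab, hac, hbc⟩
    have hxy : x ≠ y := by rintro rfl; exact hxc hyc
    by_cases hxadj : G.Adj x y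
    · exact hc4 ⟨a, x, y, c, hxa.symm, hxadj, hyc, hac.symm,
        ne_of_udist (G := G) (u := u) (by omega), ne_of_udist (G := G) (u := u) (by omega),
        fun h => hya h.symm, hxc⟩
    · cases j with
      | zero =>
        obtain rfl : u = x := (hc.dist_eq_zero_iff).mp hx
        obtain rfl : u = y := (hc.dist_eq_zero_iff).mp hy
        exact hxy rfl
      | succ j' =>
        obtain ⟨t, htd, htx, hty⟩ := hqc j' u x y b hx hy hb hxb hyb
        exact hc5 ⟨a, x, t, y, c, hxa.symm, htx.symm, hty, hyc, hac.symm,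
          ne_of_udist (G := G) (u := u) (by omega), ne_of_udist (G := G) (u := u) (by omega),
          hxy, ne_of_udist (G := G) (u := u) (by omega), ne_of_udist (G := G) (u := u) (by omega),
          fun h => not_adj_far hc (u := u) (by omega) h.symm, fun h => hya h.symm, hxadj, hxc,
          fun h => not_adj_far hc (u := u) (by omega) h⟩


end AuxLemmas

/-- Level sets of intervals in a K4-free bridged graph are convex and induce paths. -/
theorem stmt5 [Fintype V] (G : SimpleGraph V) (hc : G.Connected) (hb : Bridged G)
    (hk4 : K4Free G) (u v : V) (i : ℕ) (hi : i ≤ G.dist u v) :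
    (∀ a ∈ interval G u v ∩ {w | G.dist u w = i},
      ∀ b ∈ interval G u v ∩ {w | G.dist u w = i},
        interval G a b ⊆ interval G u v ∩ {w | G.dist u w = i}) ∧
    ∃ n : ℕ, Nonempty
      ((G.induce (interval G u v ∩ {w | G.dist u w = i})) ≃g SimpleGraph.pathGraph n) := by
  classical
  obtain ⟨⟨htc, hqc⟩, hc4, hc5⟩ := hb
  set C : Set V := interval G u v ∩ {w | G.dist u w = i} with hCdef
  have hconv : ∀ a ∈ C, ∀ b ∈ C, interval G a b ⊆ C := by
    rintro a ⟨haI, haD⟩ b ⟨hbI, hbD⟩ w hw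
    have haI' : G.dist u a + G.dist a v = G.dist u v := haI
    have hbI' : G.dist u b + G.dist b v = G.dist u v := hbI
    have haD' : G.dist u a = i := haD
    have hbD' : G.dist u b = i := hbD
    have hw' : G.dist a w + G.dist w b = G.dist a b := hw
    have h1 : G.dist u w ≤ max (G.dist u a) (G.dist u b) :=
      ball_convex hc htc hqc hc4 u (G.dist a b) a b w rfl hw'
    have h2 : G.dist v w ≤ max (G.dist v a) (G.dist v b) :=
      ball_convex hc htc hqc hc4 v (G.dist a b) a b w rfl hw'
    rw [haD', hbD', max_self] at h1
    have e1 : G.dist v a = G.dist a v := SimpleGraph.dist_comm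
    have e2 : G.dist v b = G.dist b v := SimpleGraph.dist_comm
    have e3 : G.dist v w = G.dist w v := SimpleGraph.dist_comm
    have h3 := hc.dist_triangle (u := u) (v := w) (w := v)
    have h4 : max (G.dist v a) (G.dist v b) = G.dist u v - i := by
      rw [e1, e2]; omega
    refine ⟨?_, ?_⟩
    · show G.dist u w + G.dist w v = G.dist u v
      omega
    · show G.dist u w = i
      omega
  obtain ⟨z, hz1, hz2⟩ := exists_midvertex hc (x := u) (y := v) hi
  have hzC : z ∈ C := ⟨show G.dist u z + G.dist z v = G.dist u v by omega, hz1⟩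
  refine ⟨hconv, ?_⟩
  -- triangle-freeness inside C
  have htri : ∀ a ∈ C, ∀ b ∈ C, ∀ c' ∈ C, G.Adj a b → G.Adj b c' → G.Adj a c' → False := by
    rintro a ⟨_, ha⟩ b ⟨_, hb⟩ c' ⟨_, hc'⟩ h1 h2 h3
    exact no_level_triangle hc htc hqc hc4 hc5 hk4 u ha hb hc' h1 h2 h3
  -- max degree 2 inside C
  have hdeg : ∀ w' ∈ C, ∀ a ∈ C, ∀ b ∈ C, ∀ c' ∈ C, a ≠ b → a ≠ c' → b ≠ c' →
      G.Adj w' a → G.Adj w' b → G.Adj w' c' → False := by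
    intro w' hw' a ha b hb c' hc' hab hac hbc h1 h2 h3
    have hw'd : G.dist u w' = i := hw'.2
    have had : G.dist u a = i := ha.2
    have hbd : G.dist u b = i := hb.2
    have hcd : G.dist u c' = i := hc'.2
    have nab : ¬ G.Adj a b := fun h => htri w' hw' a ha b hb h1 h h2
    have nac : ¬ G.Adj a c' := fun h => htri w' hw' a ha c' hc' h1 h h3
    have nbc : ¬ G.Adj b c' := fun h => htri w' hw' b hb c' hc' h2 h h3
    cases i with
    | zero =>
      obtain rfl : u = w' := (hc.dist_eq_zero_iff).mp hw'd
      obtain rfl : u = a := (hc.dist_eq_zero_iff).mp had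
      exact h1.ne rfl
    | succ j =>
      obtain ⟨xa, hxad, hxaw, hxaa⟩ := htc j u w' a hw'd had h1
      obtain ⟨xb, hxbd, hxbw, hxbb⟩ := htc j u w' b hw'd hbd h2
      obtain ⟨xc, hxcd, hxcw, hxcc⟩ := htc j u w' c' hw'd hcd h3
      have hdist2 : ∀ a' b' : V, a' ≠ b' → ¬ G.Adj a' b' → G.Adj w' a' → G.Adj w' b' →
          G.dist a' b' = 2 := by
        intro a' b' hne hnadj ha' hb'
        have t1 := hc.dist_triangle (u := a') (v := w') (w := b')
        have e1 : G.dist a' w' = 1 := adj_dist ha'.symm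
        have e2 : G.dist w' b' = 1 := adj_dist hb'
        have n0 : G.dist a' b' ≠ 0 := fun h => hne ((hc.dist_eq_zero_iff).mp h)
        have n1 : G.dist a' b' ≠ 1 := fun h => hnadj (dist_eq_one_iff_adj.mp h)
        omega
      have hmid : ∀ a' b' x' : V, a' ∈ C → b' ∈ C → G.dist a' b' = 2 → G.Adj x' a' →
          G.Adj x' b' → G.dist u x' = j → False := by
        intro a' b' x' ha' hb' hd2 hx1 hx2 hxd
        have : x' ∈ C := hconv a' ha' b' hb' (show G.dist a' x' + G.dist x' b' = G.dist a' b' by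
          have e1 : G.dist a' x' = 1 := adj_dist hx1.symm
          have e2 : G.dist x' b' = 1 := adj_dist hx2
          omega)
        have : G.dist u x' = j + 1 := this.2
        omega
      have hneab : xa ≠ xb := by
        rintro rfl
        exact hmid a b xa ha hb (hdist2 a b hab nab h1 h2) hxaa hxbb hxad
      have hneac : xa ≠ xc := by
        rintro rfl
        exact hmid a c' xa ha hc' (hdist2 a c' hac nac h1 h3) hxaa hxcc hxad
      have hnebc : xb ≠ xc := by
        rintro rfl
        exact hmid b c' xb hb hc' (hdist2 b c' hbc nbc h2 h3) hxbb hxcc hxbd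
      have aab : G.Adj xa xb := local_conv hc hqc hc4 hxad hxbd hw'd hxaw.symm hxbw.symm hneab
      have aac : G.Adj xa xc := local_conv hc hqc hc4 hxad hxcd hw'd hxaw.symm hxcw.symm hneac
      have abc : G.Adj xb xc := local_conv hc hqc hc4 hxbd hxcd hw'd hxbw.symm hxcw.symm hnebc
      exact hk4 ⟨w', xa, xb, xc, hxaw.symm, hxbw.symm, hxcw.symm, aab, aac, abc⟩
  -- choose p q in C at maximal distance
  set S : Finset V := C.toFinset with hSdef
  have hS : ∀ x, x ∈ S ↔ x ∈ C := fun x => Set.mem_toFinset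
  obtain ⟨pq, hpq, hmaxpre⟩ := Finset.exists_max_image (S ×ˢ S)
    (fun pr => G.dist pr.1 pr.2) ⟨(z, z), Finset.mem_product.mpr ⟨(hS z).mpr hzC, (hS z).mpr hzC⟩⟩
  obtain ⟨p, q⟩ := pq
  have hp : p ∈ C := (hS p).mp (Finset.mem_product.mp hpq).1
  have hq : q ∈ C := (hS q).mp (Finset.mem_product.mp hpq).2
  have hmax : ∀ a ∈ C, ∀ b ∈ C, G.dist a b ≤ G.dist p q := fun a ha b hb =>
    hmaxpre (a, b) (Finset.mem_product.mpr ⟨(hS a).mpr ha, (hS b).mpr hb⟩)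
  -- p is an endpoint
  have haux : ∀ b' ∈ C, G.Adj p b' → G.dist q b' = G.dist p q → False := by
    intro b' hb' hadj hqb
    have hD1 : 1 ≤ G.dist p q := by
      have h1 := hmax p hp b' hb'
      have h2 : G.dist p b' = 1 := adj_dist hadj
      omega
    have hqp : G.dist q p = G.dist p q := SimpleGraph.dist_comm
    obtain ⟨s, hsd, hsp, hsb⟩ := htc (G.dist p q - 1) q p b' (by omega) (by omega) hadj
    have hsC : s ∈ C := hconv p hp q hq (show G.dist p s + G.dist s q = G.dist p q by
      have e1 : G.dist p s = 1 := adj_dist hsp.symm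
      have e2 : G.dist s q = G.dist q s := SimpleGraph.dist_comm
      omega)
    exact htri p hp b' hb' s hsC hadj hsb.symm hsp.symm
  have hend : ∀ a ∈ C, ∀ b' ∈ C, G.Adj p a → G.Adj p b' → a = b' := by
    intro a ha b' hb' h1 h2
    by_contra hne
    have hqa : G.dist q a ≤ G.dist p q := by
      have := hmax q hq a ha
      have e : G.dist q a = G.dist a q := SimpleGraph.dist_comm
      omega
    have hqb : G.dist q b' ≤ G.dist p q := by
      have := hmax q hq b' hb'
      have e : G.dist q b' = G.dist b' q := SimpleGraph.dist_comm
      omega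
    have hqp : G.dist q p = G.dist p q := SimpleGraph.dist_comm
    have hla := dist_le_adj hc h1 q
    have hlb := dist_le_adj hc h2 q
    rw [hqp] at hla hlb
    rcases Nat.eq_or_lt_of_le hqa with hqa' | hqa'
    · exact haux a ha h1 hqa'
    rcases Nat.eq_or_lt_of_le hqb with hqb' | hqb'
    · exact haux b' hb' h2 hqb'
    have hD1 : 1 ≤ G.dist p q := by
      have h1' := hmax p hp a ha
      have h2' : G.dist p a = 1 := adj_dist h1
      omega
    have hadjab : G.Adj a b' :=
      local_conv hc hqc hc4 (show G.dist q a = G.dist p q - 1 by omega)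
        (show G.dist q b' = G.dist p q - 1 by omega)
        (show G.dist q p = G.dist p q - 1 + 1 by omega) h1 h2 hne
    exact htri p hp a ha b' hb' h1 hadjab h2
  -- stepping toward p inside C
  have hstepC : ∀ w' ∈ C, w' ≠ p → ∃ s ∈ C, G.Adj w' s ∧ G.dist p s + 1 = G.dist p w' := by
    intro w' hw' hne
    obtain ⟨s, hadj, hstep⟩ := exists_step hc hne
    have e1 : G.dist s w' = 1 := adj_dist hadj.symm
    have e2 : G.dist p s = G.dist s p := SimpleGraph.dist_comm
    have e3 : G.dist p w' = G.dist w' p := SimpleGraph.dist_comm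
    refine ⟨s, ?_, hadj, by omega⟩
    exact hconv p hp w' hw' (show G.dist p s + G.dist s w' = G.dist p w' by omega)
  -- injectivity of the distance from p on C
  have hinj : ∀ r, ∀ w1, w1 ∈ C → ∀ w2, w2 ∈ C → G.dist p w1 = r → G.dist p w2 = r →
      w1 = w2 := by
    intro r
    induction r using Nat.strong_induction_on with
    | _ r ih =>
    intro w1 hw1 w2 hw2 h1 h2
    by_contra hne
    cases r with
    | zero =>
      obtain rfl : p = w1 := (hc.dist_eq_zero_iff).mp h1
      obtain rfl : p = w2 := (hc.dist_eq_zero_iff).mp h2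
      exact hne rfl
    | succ r' =>
      have hw1p : w1 ≠ p := fun h => by rw [h, SimpleGraph.dist_self] at h1; omega
      have hw2p : w2 ≠ p := fun h => by rw [h, SimpleGraph.dist_self] at h2; omega
      obtain ⟨s1, hs1C, hadj1, hd1⟩ := hstepC w1 hw1 hw1p
      obtain ⟨s2, hs2C, hadj2, hd2⟩ := hstepC w2 hw2 hw2p
      obtain rfl : s1 = s2 := ih r' (by omega) s1 hs1C s2 hs2C (by omega) (by omega)
      cases r' with
      | zero =>
        obtain rfl : p = s1 := (hc.dist_eq_zero_iff).mp (by omega)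
        exact hne (hend w1 hw1 w2 hw2 hadj1.symm hadj2.symm)
      | succ r'' =>
        have hs1p : s1 ≠ p := fun h => by rw [h, SimpleGraph.dist_self] at hd1; omega
        obtain ⟨s2', hs2'C, hadj2', hd2'⟩ := hstepC s1 hs1C hs1p
        refine hdeg s1 hs1C w1 hw1 w2 hw2 s2' hs2'C hne ?_ ?_ hadj1.symm hadj2.symm hadj2'
        · exact ne_of_udist (G := G) (u := p) (by omega)
        · exact ne_of_udist (G := G) (u := p) (by omega)
  -- distances from p are bounded by the cardinality
  have hdc : ∀ w' ∈ C, ∀ m, m ≤ G.dist p w' → ∃ z' ∈ C, G.dist p z' = m := by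
    intro w' hw' m hm
    obtain ⟨z', h1, h2⟩ := exists_midvertex hc hm
    exact ⟨z', hconv p hp w' hw' (show G.dist p z' + G.dist z' w' = G.dist p w' by omega), h1⟩
  have hlt : ∀ w' ∈ C, G.dist p w' < S.card := by
    intro w' hw'
    have hsub : Finset.range (G.dist p w' + 1) ⊆ S.image (fun z' => G.dist p z') := by
      intro m hm
      rw [Finset.mem_range] at hm
      obtain ⟨z', hz'C, hz'd⟩ := hdc w' hw' m (by omega)
      exact Finset.mem_image.mpr ⟨z', (hS z').mpr hz'C, hz'd⟩
    have hcard := Finset.card_le_card hsub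
    have himg : (S.image fun z' => G.dist p z').card ≤ S.card := Finset.card_image_le
    rw [Finset.card_range] at hcard
    omega
  -- adjacency characterization
  have hchar1 : ∀ w1, w1 ∈ C → ∀ w2, w2 ∈ C → G.dist p w1 + 1 = G.dist p w2 → G.Adj w1 w2 := by
    intro w1 hw1 w2 hw2 hd
    have hw2p : w2 ≠ p := fun h => by rw [h, SimpleGraph.dist_self] at hd; omega
    obtain ⟨s, hsC, hadj, hsd⟩ := hstepC w2 hw2 hw2p
    obtain rfl : s = w1 := hinj (G.dist p w1) s hsC w1 hw1 (by omega) rfl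
    exact hadj.symm
  have hchar : ∀ w1, w1 ∈ C → ∀ w2, w2 ∈ C →
      (G.Adj w1 w2 ↔ G.dist p w1 + 1 = G.dist p w2 ∨ G.dist p w2 + 1 = G.dist p w1) := by
    intro w1 hw1 w2 hw2
    constructor
    · intro h
      have h1 := dist_le_adj hc h p
      have h2 := dist_le_adj hc h.symm p
      have hne : G.dist p w1 ≠ G.dist p w2 := fun he =>
        h.ne (hinj (G.dist p w1) w1 hw1 w2 hw2 rfl he.symm)
      omega
    · rintro (hd | hd)
      · exact hchar1 w1 hw1 w2 hw2 hd
      · exact (hchar1 w2 hw2 w1 hw1 hd).symm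
  -- build the isomorphism
  refine ⟨S.card, ⟨?_⟩⟩
  have hcardC : Fintype.card ↥C = S.card := (Set.toFinset_card C).symm
  let φ : ↥C → Fin S.card := fun w' => ⟨G.dist p w'.1, hlt w'.1 w'.2⟩
  have hφinj : Function.Injective φ := by
    intro a b h
    have hval : G.dist p a.1 = G.dist p b.1 := congrArg Fin.val h
    exact Subtype.ext (hinj (G.dist p a.1) a.1 a.2 b.1 b.2 rfl hval.symm)
  have hφbij : Function.Bijective φ :=
    (Fintype.bijective_iff_injective_and_card φ).mpr ⟨hφinj, by simp [hcardC]⟩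
  refine ⟨Equiv.ofBijective φ hφbij, ?_⟩
  intro a b
  rw [pathGraph_adj]
  show _ ↔ (G.induce C).Adj a b
  have : (G.induce C).Adj a b ↔ G.Adj a.1 b.1 := by
    simp [SimpleGraph.comap_adj]
  rw [this]
  exact ((hchar a.1 a.2 b.1 b.2).symm)
end

section
/- In a K4-free bridged graph, every fiber F(x) of the star St(z) is starshaped with respect to x: for every u in F(x), the interval I(u,x) is contained in F(x). -/
open SimpleGraph

variable {V : Type*}

/-- Every fiber of the star `St(z)` is starshaped with respect to its base vertex. -/
theorem stmt6 (G : SimpleGraph V) (hc : G.Connected) (hb : Bridged G) (hk4 : K4Free G)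
    (z x : V) (hx : x ∈ starSet G z) :
    StarshapedWrt G x (fiberSet G z x) := by
  intro u hu w hw
  -- hw : dist x w + dist w u = dist x u
  have hw' : G.dist x w + G.dist w u = G.dist x u := hw
  rcases hu with ⟨hxz, hu⟩ | ⟨hxz, hu⟩
  · -- panel case
    left
    refine ⟨hxz, ?_⟩
    have hA := Set.ext_iff.mp hu
    have hxm : x ∈ mproj G u (closedNbhd G z) := (hA x).mpr rfl
    obtain ⟨hxA, hxmin⟩ := hxm
    ext b
    simp only [Set.mem_singleton_iff]
    constructor
    · rintro ⟨hbA, hbmin⟩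
      have h1 : G.dist w b ≤ G.dist w x := hbmin x hxA
      have h2 : G.dist u b ≤ G.dist u w + G.dist w b := hc.dist_triangle
      have h3 : G.dist u x ≤ G.dist u b := hxmin b hbA
      have hcw : G.dist u w = G.dist w u := SimpleGraph.dist_comm ..
      have hcx : G.dist u x = G.dist x u := SimpleGraph.dist_comm ..
      have hcwx : G.dist w x = G.dist x w := SimpleGraph.dist_comm ..
      have hbu : G.dist u b = G.dist u x := by omega
      have : b ∈ mproj G u (closedNbhd G z) := ⟨hbA, fun c hc' => hbu ▸ hxmin c hc'⟩
      exact (hA b).mp this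
    · intro hb
      subst hb
      refine ⟨hxA, fun c hcA => ?_⟩
      have h3 : G.dist u b ≤ G.dist u c := hxmin c hcA
      have h2 : G.dist u c ≤ G.dist u w + G.dist w c := hc.dist_triangle
      have hcw : G.dist u w = G.dist w u := SimpleGraph.dist_comm ..
      have hcx : G.dist u b = G.dist b u := SimpleGraph.dist_comm ..
      have hcwx : G.dist w b = G.dist b w := SimpleGraph.dist_comm ..
      omega
  · -- cone case
    right
    refine ⟨hxz, ?_⟩
    obtain ⟨y, y', hyy', hadj, hzy, hzy', hxy, hxy', hproj, hdist⟩ := hu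
    refine ⟨y, y', hyy', hadj, hzy, hzy', hxy, hxy', ?_, ?_⟩
    · have hA := Set.ext_iff.mp hproj
      have hym : y ∈ mproj G u (closedNbhd G z) := (hA y).mpr (Or.inl rfl)
      have hy'm : y' ∈ mproj G u (closedNbhd G z) := (hA y').mpr (Or.inr rfl)
      obtain ⟨hyA, hymin⟩ := hym
      obtain ⟨hy'A, hy'min⟩ := hy'm
      have hxy1 : G.dist x y = 1 := SimpleGraph.dist_eq_one_iff_adj.mpr hxy
      have hxy'1 : G.dist x y' = 1 := SimpleGraph.dist_eq_one_iff_adj.mpr hxy'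
      have hcw : G.dist u w = G.dist w u := SimpleGraph.dist_comm ..
      have hcx : G.dist u x = G.dist x u := SimpleGraph.dist_comm ..
      have hcwx : G.dist w x = G.dist x w := SimpleGraph.dist_comm ..
      -- d w y = d w x + 1
      have t1 : G.dist w y ≤ G.dist w x + G.dist x y := hc.dist_triangle
      have t2 : G.dist u y ≤ G.dist u w + G.dist w y := hc.dist_triangle
      have t1' : G.dist w y' ≤ G.dist w x + G.dist x y' := hc.dist_triangle
      have t2' : G.dist u y' ≤ G.dist u w + G.dist w y' := hc.dist_triangle
      have hyy : G.dist u y' = G.dist u y := by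
        have := hymin y' hy'A
        have := hy'min y hyA
        omega
      have hwy : G.dist w y = G.dist w x + 1 := by omega
      have hwy' : G.dist w y' = G.dist w x + 1 := by omega
      ext c
      constructor
      · rintro ⟨hcA, hcmin⟩
        have h1 : G.dist w c ≤ G.dist w y := hcmin y hyA
        have h2 : G.dist u c ≤ G.dist u w + G.dist w c := hc.dist_triangle
        have h3 : G.dist u y ≤ G.dist u c := hymin c hcA
        have hcu : G.dist u c = G.dist u y := by omega
        have : c ∈ mproj G u (closedNbhd G z) :=
          ⟨hcA, fun e heA => hcu ▸ hymin e heA⟩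
        exact (hA c).mp this
      · intro hcmem
        have hmin : ∀ e ∈ closedNbhd G z, G.dist w x + 1 ≤ G.dist w e := by
          intro e heA
          have h3 : G.dist u y ≤ G.dist u e := hymin e heA
          have h2 : G.dist u e ≤ G.dist u w + G.dist w e := hc.dist_triangle
          omega
        rcases hcmem with rfl | rfl
        · exact ⟨hyA, fun e heA => hwy ▸ hmin e heA⟩
        · exact ⟨hy'A, fun e heA => hwy' ▸ hmin e heA⟩
    · have hA := Set.ext_iff.mp hproj
      have hym : y ∈ mproj G u (closedNbhd G z) := (hA y).mpr (Or.inl rfl)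
      obtain ⟨hyA, hymin⟩ := hym
      have hxy1 : G.dist x y = 1 := SimpleGraph.dist_eq_one_iff_adj.mpr hxy
      have hcw : G.dist u w = G.dist w u := SimpleGraph.dist_comm ..
      have hcx : G.dist u x = G.dist x u := SimpleGraph.dist_comm ..
      have hcwx : G.dist w x = G.dist x w := SimpleGraph.dist_comm ..
      have t1 : G.dist w y ≤ G.dist w x + G.dist x y := hc.dist_triangle
      have t2 : G.dist u y ≤ G.dist u w + G.dist w y := hc.dist_triangle
      omega
end

section
/- If z is a median vertex of a K4-free bridged graph G on n vertices, then every fiber F(x) of the star St(z) satisfies |F(x)| ≤ n/2. -/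
open SimpleGraph

variable {V : Type*}

lemma half_bound [Fintype V] (G : SimpleGraph V) (hc : G.Connected) (z u : V)
    (hadj : G.Adj z u)
    (hmed : ∀ w : V, ∑ t : V, G.dist z t ≤ ∑ t : V, G.dist w t) :
    2 * (Finset.univ.filter (fun t => G.dist u t < G.dist z t)).card ≤ Fintype.card V := by
  classical
  set A := Finset.univ.filter (fun t => G.dist u t < G.dist z t) with hA
  set B := Finset.univ.filter (fun t => G.dist z t < G.dist u t) with hB
  have hd1 : G.dist z u = 1 := (SimpleGraph.dist_eq_one_iff_adj).2 hadj
  have key : ∀ t : V, ((G.dist u t : ℤ) - G.dist z t)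
      = (if t ∈ B then (1:ℤ) else 0) - (if t ∈ A then (1:ℤ) else 0) := by
    intro t
    have h1 : G.dist u t ≤ G.dist z t + 1 := by
      have h := hc.dist_triangle (u := u) (v := z) (w := t)
      have huz : G.dist u z = 1 := (SimpleGraph.dist_comm).trans hd1
      omega
    have h2 : G.dist z t ≤ G.dist u t + 1 := by
      have h := hc.dist_triangle (u := z) (v := u) (w := t)
      rw [hd1] at h; omega
    by_cases hA' : t ∈ A <;> by_cases hB' : t ∈ B <;>
      simp only [hA, hB, Finset.mem_filter, Finset.mem_univ, true_and, not_lt] at hA' hB' <;>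
      simp only [hA, hB, Finset.mem_filter, Finset.mem_univ, true_and, hA', hB',
        if_pos, if_neg, not_lt] <;> omega
  have hsum0 : (0:ℤ) ≤ ∑ t : V, ((G.dist u t : ℤ) - G.dist z t) := by
    rw [Finset.sum_sub_distrib]
    have h := hmed u
    have h' : (∑ t : V, (G.dist z t : ℤ)) ≤ ∑ t : V, (G.dist u t : ℤ) := by
      exact_mod_cast h
    omega
  have hsum1 : ∑ t : V, ((G.dist u t : ℤ) - G.dist z t) = (B.card : ℤ) - A.card := by
    rw [Finset.sum_congr rfl (fun t _ => key t), Finset.sum_sub_distrib]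
    congr 1 <;> simp [Finset.sum_ite_mem]
  have hAB : A.card ≤ B.card := by omega
  have hdisj : Disjoint A B := by
    rw [Finset.disjoint_left]
    intro t ht ht'
    simp only [hA, hB, Finset.mem_filter, Finset.mem_univ, true_and] at ht ht'
    omega
  have := Finset.card_union_of_disjoint hdisj ▸ Finset.card_le_univ (A ∪ B)
  omega

lemma mproj_lt (G : SimpleGraph V) (w z a : V)
    (hA : a ∈ mproj G w (closedNbhd G z)) (hz : z ∉ mproj G w (closedNbhd G z)) :
    G.dist a w < G.dist z w := by
  simp only [mproj, Set.mem_setOf_eq, not_and, not_forall] at hA hz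
  obtain ⟨haN, hmin⟩ := hA
  obtain ⟨b, hbN, hb⟩ := hz (Set.mem_insert z _)
  rw [not_le] at hb
  have := hmin b hbN
  have e1 : G.dist a w = G.dist w a := SimpleGraph.dist_comm
  have e2 : G.dist z w = G.dist w z := SimpleGraph.dist_comm
  omega

lemma common_adj (G : SimpleGraph V) (h4 : NoInducedC4 G) {x z : V}
    (hxz : ¬ G.Adj x z) (hne : x ≠ z) {a b : V}
    (ha1 : G.Adj z a) (ha2 : G.Adj x a) (hb1 : G.Adj z b) (hb2 : G.Adj x b)
    (hab : a ≠ b) : G.Adj a b := by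
  by_contra h
  exact h4 ⟨x, a, z, b, ha2, ha1.symm, hb1, hb2.symm, hne, hab, hxz, h⟩

/-- If `z` is a median vertex, every fiber of `St(z)` contains at most half of the
vertices. -/
theorem stmt10 [Fintype V] (G : SimpleGraph V) (hc : G.Connected) (hb : Bridged G)
    (hk4 : K4Free G) (z : V)
    (hmed : ∀ w : V, ∑ t : V, G.dist z t ≤ ∑ t : V, G.dist w t)
    (x : V) (hx : x ∈ starSet G z) :
    2 * (fiberSet G z x).ncard ≤ Fintype.card V := by
  classical
  rcases Set.eq_empty_or_nonempty (fiberSet G z x) with hne | ⟨w0, hw0⟩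
  · simp [hne]
  have main : ∃ u, G.Adj z u ∧ ∀ w ∈ fiberSet G z x, G.dist u w < G.dist z w := by
    by_cases hxz : G.Adj x z
    · refine ⟨x, hxz.symm, fun w hw => ?_⟩
      rcases hw with ⟨_, hpan⟩ | ⟨hcon, _⟩
      swap
      · exact absurd hxz hcon
      simp only [panelFiber, Set.mem_setOf_eq] at hpan
      have hxm : x ∈ mproj G w (closedNbhd G z) := by rw [hpan]; rfl
      have hzm : z ∉ mproj G w (closedNbhd G z) := by
        rw [hpan]; simp [hxz.ne']
      exact mproj_lt G w z x hxm hzm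
    · obtain ⟨y, y', hyy', hadjyy', hzy, hzy', hxy, hxy', hmpr0, hd0⟩ :
          w0 ∈ coneFiber G z x := by
        rcases hw0 with ⟨hcon, _⟩ | ⟨_, hcone⟩
        · exact absurd hcon hxz
        · exact hcone
      have hym0 : y ∈ mproj G w0 (closedNbhd G z) := by
        rw [hmpr0]; exact Set.mem_insert y _
      have hy0 : G.dist w0 y ≤ G.dist w0 z := by
        simp only [mproj, Set.mem_setOf_eq] at hym0
        exact hym0.2 z (Set.mem_insert z _)
      have hxnez : x ≠ z := by
        intro h; subst h; omega
      refine ⟨y, hzy, fun w hw => ?_⟩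
      obtain ⟨y2, y2', hy22', hadj22, hzy2, hzy2', hxy2, hxy2', hmpr, hd⟩ :
          w ∈ coneFiber G z x := by
        rcases hw with ⟨hcon, _⟩ | ⟨_, hcone⟩
        · exact absurd hcon hxz
        · exact hcone
      -- y2 and y2' lie in {y, y'}, by K4-freeness and no induced C4
      have hmem : ∀ c : V, G.Adj z c → G.Adj x c → c = y ∨ c = y' := by
        intro c hzc hxc
        by_contra hcc
        push_neg at hcc
        have hc1 : G.Adj y c := common_adj G hb.2.1 hxz hxnez hzy hxy hzc hxc
          (fun h => hcc.1 h.symm)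
        have hc2 : G.Adj y' c := common_adj G hb.2.1 hxz hxnez hzy' hxy' hzc hxc
          (fun h => hcc.2 h.symm)
        exact hk4 ⟨z, y, y', c, hzy, hzy', hzc, hadjyy', hc1, hc2⟩
      have hyin : y ∈ ({y2, y2'} : Set V) := by
        rcases hmem y2 hzy2 hxy2 with h2 | h2 <;> rcases hmem y2' hzy2' hxy2' with h3 | h3
        · exact Or.inl h2.symm
        · exact Or.inl h2.symm
        · exact Or.inr h3.symm
        · exact absurd (h2.trans h3.symm) hy22'
      have hym : y ∈ mproj G w (closedNbhd G z) := by rw [hmpr]; exact hyin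
      have hzm : z ∉ mproj G w (closedNbhd G z) := by
        rw [hmpr]
        simp only [Set.mem_insert_iff, Set.mem_singleton_iff]
        push_neg
        exact ⟨hzy2.ne, hzy2'.ne⟩
      exact mproj_lt G w z y hym hzm
  obtain ⟨u, hadj, hsub⟩ := main
  have h1 := half_bound G hc z u hadj hmed
  have h2 : (fiberSet G z x).ncard ≤
      (Finset.univ.filter (fun t => G.dist u t < G.dist z t)).card := by
    calc (fiberSet G z x).ncard
        ≤ ((Finset.univ.filter (fun t => G.dist u t < G.dist z t) : Finset V) : Set V).ncard := by
          apply Set.ncard_le_ncard _ (Set.toFinite _)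
          intro w hw
          simp only [Finset.coe_filter, Finset.mem_univ, true_and, Set.mem_setOf_eq]
          exact hsub w hw
      _ = _ := Set.ncard_coe_finset _
  omega
end

section
/- In a K4-free bridged graph G, the total boundary ∂*F(x) of any fiber F(x) of the star St(z) is a starshaped tree rooted at x: for every v ∈ ∂*F(x), the interval I(v,x) is contained in ∂*F(x) and induces a path, i.e., v has a unique neighbor in I(v,x). -/
open SimpleGraph

variable {V : Type*}

section Aux

variable {G : SimpleGraph V}

private lemma mem_closedNbhd {z a : V} : a ∈ closedNbhd G z ↔ a = z ∨ G.Adj z a := by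
  simp [closedNbhd]

private lemma exists_adj_dist (hc : G.Connected) {u v : V} {k : ℕ}
    (h : G.dist u v = k + 1) : ∃ w, G.Adj u w ∧ G.dist w v = k := by
  obtain ⟨p, hp⟩ := (hc u v).exists_walk_length_eq_dist
  cases p with
  | nil => rw [h] at hp; simp at hp
  | cons ha q =>
    rename_i w
    have hq : q.length = k := by
      rw [h] at hp; simpa [SimpleGraph.Walk.length_cons] using hp
    refine ⟨w, ha, le_antisymm ?_ ?_⟩
    · have := SimpleGraph.dist_le q
      omega
    · have h2 : G.dist u v ≤ G.dist u w + G.dist w v := hc.dist_triangle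
      rw [SimpleGraph.dist_eq_one_iff_adj.2 ha] at h2
      omega

private lemma mproj_nonempty (u : V) {A : Set V} (hA : A.Nonempty) :
    ∃ a ∈ A, ∀ b ∈ A, G.dist u a ≤ G.dist u b := by
  obtain ⟨d, ⟨a, ha, rfl⟩, hmin⟩ :=
    Nat.lt_wfRel.wf.has_min ((fun a => G.dist u a) '' A) (hA.image _)
  exact ⟨a, ha, fun b hb => not_lt.1 fun hlt => hmin _ ⟨b, hb, rfl⟩ hlt⟩

/-- The metric projection on a closed neighborhood is a clique. -/
private lemma mproj_clique (hc : G.Connected) (hTC : TriangleCondition G)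
    (hQC : QuadrangleCondition G) (hC4 : NoInducedC4 G) {u z a b : V}
    (ha : a ∈ mproj G u (closedNbhd G z)) (hb : b ∈ mproj G u (closedNbhd G z))
    (hab : a ≠ b) : G.Adj a b := by
  obtain ⟨haN, hamin⟩ := ha
  obtain ⟨hbN, hbmin⟩ := hb
  have hzN : z ∈ closedNbhd G z := mem_closedNbhd.2 (Or.inl rfl)
  have heq : G.dist u b = G.dist u a :=
    le_antisymm (hbmin a haN) (hamin b hbN)
  have hm0 : G.dist u a ≠ 0 := by
    intro h0
    have h1 : u = a := (hc.dist_eq_zero_iff).1 h0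
    have h2 : u = b := (hc.dist_eq_zero_iff).1 (by omega)
    exact hab (h1 ▸ h2)
  obtain ⟨m, hm⟩ : ∃ m, G.dist u a = m + 1 := ⟨G.dist u a - 1, by omega⟩
  -- neither a nor b can be z
  have haz : a ≠ z := by
    intro heq
    have hzb : G.Adj a b := by
      rcases mem_closedNbhd.1 hbN with h | h
      · exact absurd (h.trans heq.symm) hab.symm
      · rw [heq]; exact h
    obtain ⟨t, htd, hta, htb⟩ := hTC m u a b hm (by omega) hzb
    have hta' : G.Adj t z := by rw [← heq]; exact hta
    have htN : t ∈ closedNbhd G z := mem_closedNbhd.2 (Or.inr hta'.symm)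
    have := hamin t htN
    omega
  have hbz : b ≠ z := by
    intro heq
    have hza : G.Adj b a := by
      rcases mem_closedNbhd.1 haN with h | h
      · exact absurd (h.trans heq.symm) hab
      · rw [heq]; exact h
    obtain ⟨t, htd, htb, hta⟩ := hTC m u b a (by omega) hm hza
    have htb' : G.Adj t z := by rw [← heq]; exact htb
    have htN : t ∈ closedNbhd G z := mem_closedNbhd.2 (Or.inr htb'.symm)
    have := hbmin t htN
    omega
  have hza : G.Adj z a := (mem_closedNbhd.1 haN).resolve_left haz
  have hzb : G.Adj z b := (mem_closedNbhd.1 hbN).resolve_left hbz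
  by_contra hnadj
  have hdz_ge : G.dist u a ≤ G.dist u z := hamin z hzN
  have hdz_le : G.dist u z ≤ G.dist u a + 1 := by
    have h1 : G.dist u z ≤ G.dist u a + G.dist a z := hc.dist_triangle
    rw [SimpleGraph.dist_eq_one_iff_adj.2 hza.symm] at h1
    exact h1
  have hdz : G.dist u z = m + 2 := by
    rcases Nat.lt_or_ge (G.dist u z) (m + 2) with hlt | hge
    · have hz1 : G.dist u z = m + 1 := by omega
      obtain ⟨t, htd, htz, hta⟩ := hTC m u z a hz1 hm hza
      have htN : t ∈ closedNbhd G z := mem_closedNbhd.2 (Or.inr htz.symm)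
      have := hamin t htN
      omega
    · omega
  obtain ⟨t, htd, hta, htb⟩ := hQC m u a b z hm (by omega) hdz hza.symm hzb.symm
  have htz : ¬ (t = z ∨ G.Adj z t) := by
    intro h
    have htN : t ∈ closedNbhd G z := mem_closedNbhd.2 h
    have := hamin t htN
    omega
  push_neg at htz
  exact hC4 ⟨a, t, b, z, hta.symm, htb, hzb.symm, hza, hab, htz.1,
    hnadj, fun h => htz.2 h.symm⟩

/-- The quadrangle-condition descent step: given a vertex `s` one step closer to `a`
than `v`, it must be adjacent to any downward neighbour `w` of `v`. -/
private lemma key_step (hc : G.Connected) (hQC : QuadrangleCondition G)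
    (hC4 : NoInducedC4 G) {v s w a : V} {K : ℕ}
    (hsv : G.Adj v s) (hwv : G.Adj v w) (hsw : s ≠ w)
    (hav : G.dist a v = K + 2) (has : G.dist a s = K + 1) (haw : G.dist a w = K + 1) :
    G.Adj s w := by
  by_contra hne
  obtain ⟨t, hat, hts, htw⟩ := hQC K a s w v has haw hav hsv.symm hwv.symm
  have hvt : ¬ G.Adj v t := by
    intro h
    have h1 : G.dist a v ≤ G.dist a t + G.dist t v := hc.dist_triangle
    rw [SimpleGraph.dist_eq_one_iff_adj.2 h.symm] at h1
    omega
  have hvt' : v ≠ t := by rintro rfl; omega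
  exact hC4 ⟨v, s, t, w, hsv, hts.symm, htw, hwv.symm, hvt', hsw, hvt, hne⟩

/-- Generic form of the theorem, given convexity of the fiber and the existence of
certificates for boundary vertices. -/
private lemma main_generic (hc : G.Connected) (hQC : QuadrangleCondition G)
    (hC4 : NoInducedC4 G) (hk4 : K4Free G) {F : Set V} {x : V}
    (hconv : ∀ v ∈ F, ∀ w, G.dist v w + G.dist w x = G.dist v x → w ∈ F)
    (hcert : ∀ v ∈ F, ∀ u, G.Adj v u → u ∉ F →
      ∃ a s c, 1 ≤ c ∧ G.Adj v s ∧ s ∉ F ∧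
        G.dist a v = G.dist v x + c ∧ G.dist a s + 1 = G.dist v x + c ∧
        ∀ w ∈ F, G.dist a w = G.dist w x + c) :
    ∀ v ∈ totalBoundary G F, interval G v x ⊆ totalBoundary G F ∧
      (v ≠ x → ∃! w : V, w ∈ interval G v x ∧ G.Adj v w) := by
  have prop : ∀ v ∈ totalBoundary G F, ∀ w, G.Adj v w → G.dist w x + 1 = G.dist v x →
      w ∈ totalBoundary G F := by
    rintro v ⟨hvF, u, hvu, huF⟩ w hvw hwd
    have hwF : w ∈ F := hconv v hvF w (by
      rw [SimpleGraph.dist_eq_one_iff_adj.2 hvw]; omega)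
    obtain ⟨a, s, c, hc1, hvs, hsF, hav, has, hgate⟩ := hcert v hvF u hvu huF
    obtain ⟨K, hK⟩ : ∃ K, G.dist v x + c = K + 2 := ⟨G.dist v x + c - 2, by omega⟩
    have haw : G.dist a w = K + 1 := by rw [hgate w hwF]; omega
    have hadj := key_step (a := a) (K := K) hc hQC hC4 hvs hvw
      (fun h => hsF (by rw [h]; exact hwF)) (by omega) (by omega) haw
    exact ⟨hwF, s, hadj.symm, hsF⟩
  intro v hv
  constructor
  · -- the interval to the root is contained in the total boundary
    suffices H : ∀ k, ∀ v, G.dist v x = k → v ∈ totalBoundary G F →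
        interval G v x ⊆ totalBoundary G F from H _ v rfl hv
    intro k
    induction k with
    | zero =>
      intro v hd hvB w hw
      have hw' : G.dist v w + G.dist w x = G.dist v x := hw
      have hwv : w = v := ((hc.dist_eq_zero_iff).1 (by omega)).symm
      rwa [hwv]
    | succ k ih =>
      intro v hd hvB w hw
      have hw' : G.dist v w + G.dist w x = k + 1 := by rw [← hd]; exact hw
      by_cases hwv : w = v
      · rwa [hwv]
      · have hvw0 : G.dist v w ≠ 0 := fun h => hwv ((hc.dist_eq_zero_iff).1 h).symm
        obtain ⟨m, hm⟩ : ∃ m, G.dist v w = m + 1 := ⟨G.dist v w - 1, by omega⟩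
        obtain ⟨v₁, hvv₁, hv₁w⟩ := exists_adj_dist hc hm
        have hv₁x : G.dist v₁ x = k := by
          have h1 : G.dist v₁ x ≤ G.dist v₁ w + G.dist w x := hc.dist_triangle
          have h2 : G.dist v x ≤ G.dist v v₁ + G.dist v₁ x := hc.dist_triangle
          have h3 : G.dist v v₁ = 1 := SimpleGraph.dist_eq_one_iff_adj.2 hvv₁
          omega
        have hv₁B : v₁ ∈ totalBoundary G F := prop v hvB v₁ hvv₁ (by omega)
        exact ih v₁ hv₁x hv₁B (show G.dist v₁ w + G.dist w x = G.dist v₁ x by omega)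
  · -- uniqueness of the downward neighbour
    intro hvx
    obtain ⟨hvF, u, hvu, huF⟩ := hv
    have hk0 : G.dist v x ≠ 0 := fun h => hvx ((hc.dist_eq_zero_iff).1 h)
    obtain ⟨k, hk⟩ : ∃ k, G.dist v x = k + 1 := ⟨G.dist v x - 1, by omega⟩
    obtain ⟨w, hvw, hwx⟩ := exists_adj_dist hc hk
    have hwI : w ∈ interval G v x := show G.dist v w + G.dist w x = G.dist v x by
      rw [SimpleGraph.dist_eq_one_iff_adj.2 hvw]; omega
    refine ⟨w, ⟨hwI, hvw⟩, ?_⟩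
    rintro w' ⟨hw'I, hvw'⟩
    have hI' : G.dist v w' + G.dist w' x = G.dist v x := hw'I
    have hdw' : G.dist w' x = k := by
      rw [SimpleGraph.dist_eq_one_iff_adj.2 hvw'] at hI'; omega
    by_contra hne
    rcases Nat.eq_zero_or_pos k with h0 | hpos
    · exact hne (((hc.dist_eq_zero_iff).1 (show G.dist w' x = 0 by omega)).trans
        ((hc.dist_eq_zero_iff).1 (show G.dist w x = 0 by omega)).symm)
    · have hwF : w ∈ F := hconv v hvF w hwI
      have hw'F : w' ∈ F := hconv v hvF w' hw'I
      obtain ⟨K, hKk⟩ : ∃ K, k = K + 1 := ⟨k - 1, by omega⟩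
      have hxv : G.dist x v = K + 2 := by rw [SimpleGraph.dist_comm]; omega
      have hadjww : G.Adj w' w := by
        by_contra hnadj
        have hxw' : G.dist x w' = K + 1 := by rw [SimpleGraph.dist_comm]; omega
        have hxw : G.dist x w = K + 1 := by rw [SimpleGraph.dist_comm]; omega
        obtain ⟨t, hxt, htw', htw⟩ := hQC K x w' w v hxw' hxw hxv hvw'.symm hvw.symm
        have hvt : ¬ G.Adj v t := by
          intro h
          have h1 : G.dist x v ≤ G.dist x t + G.dist t v := hc.dist_triangle
          rw [SimpleGraph.dist_eq_one_iff_adj.2 h.symm] at h1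
          omega
        have hvt' : v ≠ t := by rintro rfl; omega
        exact hC4 ⟨v, w', t, w, hvw', htw'.symm, htw, hvw.symm, hvt', hne, hvt, hnadj⟩
      obtain ⟨a, s, c, hc1, hvs, hsF, hav, has, hgate⟩ := hcert v hvF u hvu huF
      obtain ⟨K', hK'⟩ : ∃ K', G.dist v x + c = K' + 2 := ⟨G.dist v x + c - 2, by omega⟩
      have h1 : G.Adj s w := key_step (a := a) (K := K') hc hQC hC4 hvs hvw
        (fun h => hsF (by rw [h]; exact hwF)) (by omega) (by omega)
        (by rw [hgate w hwF]; omega)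
      have h2 : G.Adj s w' := key_step (a := a) (K := K') hc hQC hC4 hvs hvw'
        (fun h => hsF (by rw [h]; exact hw'F)) (by omega) (by omega)
        (by rw [hgate w' hw'F]; omega)
      exact hk4 ⟨v, w, w', s, hvw, hvw', hvs, hadjww.symm, h1.symm, h2.symm⟩

private lemma fiber_eq_panel {z x : V} (h : G.Adj x z) :
    fiberSet G z x = panelFiber G z x := by
  ext u; simp [fiberSet, h]

private lemma fiber_eq_cone {z x : V} (h : ¬ G.Adj x z) :
    fiberSet G z x = coneFiber G z x := by
  ext u; simp [fiberSet, h]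

private lemma panel_dists (hc : G.Connected) (hTC : TriangleCondition G) {z x : V}
    (hxz : G.Adj x z) {v : V} (hv : v ∈ panelFiber G z x) :
    ∀ a ∈ closedNbhd G z, G.dist v a = G.dist v x + G.dist x a := by
  have hvset : mproj G v (closedNbhd G z) = {x} := hv
  have hxmem : x ∈ mproj G v (closedNbhd G z) := by rw [hvset]; rfl
  obtain ⟨hxN, hxmin⟩ := hxmem
  have hgt : ∀ a ∈ closedNbhd G z, a ≠ x → G.dist v x + 1 ≤ G.dist v a := by
    intro a haN hax
    have hnot : ¬ ∀ b ∈ closedNbhd G z, G.dist v a ≤ G.dist v b := by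
      intro hall
      have hmem : a ∈ mproj G v (closedNbhd G z) := ⟨haN, hall⟩
      rw [hvset, Set.mem_singleton_iff] at hmem
      exact hax hmem
    push_neg at hnot
    obtain ⟨b, hbN, hblt⟩ := hnot
    have := hxmin b hbN
    omega
  have hzx : z ≠ x := fun h => G.irrefl (h ▸ hxz)
  have hzN : z ∈ closedNbhd G z := mem_closedNbhd.2 (Or.inl rfl)
  have hdxz : G.dist x z = 1 := SimpleGraph.dist_eq_one_iff_adj.2 hxz
  have hvz : G.dist v z = G.dist v x + 1 := by
    have h1 : G.dist v z ≤ G.dist v x + G.dist x z := hc.dist_triangle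
    have h2 := hgt z hzN hzx
    omega
  intro a haN
  by_cases hax : a = x
  · subst hax; simp [SimpleGraph.dist_self]
  by_cases haadj : G.Adj x a
  · have h1 : G.dist v a ≤ G.dist v x + G.dist x a := hc.dist_triangle
    have h2 : G.dist x a = 1 := SimpleGraph.dist_eq_one_iff_adj.2 haadj
    have h3 := hgt a haN hax
    omega
  · have haz : a ≠ z := fun h => haadj (by rw [h]; exact hxz)
    have hza : G.Adj z a := (mem_closedNbhd.1 haN).resolve_left haz
    have hdza : G.dist z a = 1 := SimpleGraph.dist_eq_one_iff_adj.2 hza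
    have hxa2 : G.dist x a = 2 := by
      have hle : G.dist x a ≤ G.dist x z + G.dist z a := hc.dist_triangle
      have h0 : G.dist x a ≠ 0 := fun h => hax ((hc.dist_eq_zero_iff).1 h).symm
      have h1 : G.dist x a ≠ 1 := fun h => haadj (SimpleGraph.dist_eq_one_iff_adj.1 h)
      omega
    have hub : G.dist v a ≤ G.dist v z + G.dist z a := hc.dist_triangle
    have hlb := hgt a haN hax
    have hne1 : G.dist v a ≠ G.dist v x + 1 := by
      intro heq
      obtain ⟨t, htd, htz, hta⟩ := hTC (G.dist v x) v z a hvz heq hza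
      have htN : t ∈ closedNbhd G z := mem_closedNbhd.2 (Or.inr htz.symm)
      have htmem : t ∈ mproj G v (closedNbhd G z) :=
        ⟨htN, fun b hb => by rw [htd]; exact hxmin b hb⟩
      rw [hvset, Set.mem_singleton_iff] at htmem
      exact haadj (htmem ▸ hta)
    omega

private lemma panel_of_dists (hc : G.Connected) {z x : V} (hxz : G.Adj x z) {v : V}
    (h : ∀ a ∈ closedNbhd G z, G.dist v a = G.dist v x + G.dist x a) :
    v ∈ panelFiber G z x := by
  have hxN : x ∈ closedNbhd G z := mem_closedNbhd.2 (Or.inr hxz.symm)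
  show mproj G v (closedNbhd G z) = {x}
  ext a
  simp only [Set.mem_singleton_iff]
  constructor
  · rintro ⟨haN, hamin⟩
    have h1 := hamin x hxN
    have h2 := h a haN
    have h3 : G.dist x a = 0 := by
      have h4 := h x hxN
      simp [SimpleGraph.dist_self] at h4
      omega
    exact ((hc.dist_eq_zero_iff).1 h3).symm
  · rintro rfl
    exact ⟨hxN, fun b hbN => by rw [h b hbN]; omega⟩

private lemma panel_nbr_ge (hc : G.Connected) (hTC : TriangleCondition G) {z x : V}
    (hxz : G.Adj x z) {v u : V} (hv : v ∈ panelFiber G z x) (hadj : G.Adj v u)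
    (hu : u ∉ panelFiber G z x) : G.dist v x ≤ G.dist u x := by
  by_contra hlt
  push_neg at hlt
  have hd1 : G.dist u v = 1 := SimpleGraph.dist_eq_one_iff_adj.2 hadj.symm
  have hvu : G.dist v x ≤ G.dist v u + G.dist u x := hc.dist_triangle
  rw [SimpleGraph.dist_comm] at hd1
  have hux : G.dist u x + 1 = G.dist v x := by omega
  apply hu
  apply panel_of_dists hc hxz
  intro a haN
  have h1 := panel_dists hc hTC hxz hv a haN
  have h2 : G.dist u a ≤ G.dist u x + G.dist x a := hc.dist_triangle
  have h3 : G.dist v a ≤ G.dist v u + G.dist u a := hc.dist_triangle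
  omega

private lemma cert_panel (hc : G.Connected) (hTC : TriangleCondition G) {z x : V}
    (hxz : G.Adj x z) {v u : V} (hv : v ∈ panelFiber G z x) (hadj : G.Adj v u)
    (hu : u ∉ panelFiber G z x) :
    ∃ a s c, 1 ≤ c ∧ G.Adj v s ∧ s ∉ panelFiber G z x ∧
      G.dist a v = G.dist v x + c ∧ G.dist a s + 1 = G.dist v x + c ∧
      ∀ w ∈ panelFiber G z x, G.dist a w = G.dist w x + c := by
  have hzN : z ∈ closedNbhd G z := mem_closedNbhd.2 (Or.inl rfl)
  have hxN : x ∈ closedNbhd G z := mem_closedNbhd.2 (Or.inr hxz.symm)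
  -- a minimizer of u on N[z] different from x
  obtain ⟨a, hamem, hax⟩ : ∃ a, a ∈ mproj G u (closedNbhd G z) ∧ a ≠ x := by
    obtain ⟨a₀, ha₀N, ha₀min⟩ := mproj_nonempty (G := G) u ⟨z, hzN⟩
    by_contra hno
    push_neg at hno
    apply hu
    show mproj G u (closedNbhd G z) = {x}
    apply Set.eq_singleton_iff_unique_mem.2
    have hx0 : a₀ = x := hno a₀ ⟨ha₀N, ha₀min⟩
    refine ⟨hx0 ▸ ⟨ha₀N, ha₀min⟩, fun b hb => hno b hb⟩
  obtain ⟨haN, hamin⟩ := hamem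
  have hδ1 : 1 ≤ G.dist x a := by
    have : G.dist x a ≠ 0 := fun h => hax ((hc.dist_eq_zero_iff).1 h).symm
    omega
  have hva : G.dist v a = G.dist v x + G.dist x a := panel_dists hc hTC hxz hv a haN
  have hua_le : G.dist u a ≤ G.dist u x := hamin x hxN
  have hux_le : G.dist u x ≤ G.dist v x + 1 := by
    have h1 : G.dist u x ≤ G.dist u v + G.dist v x := hc.dist_triangle
    rw [SimpleGraph.dist_eq_one_iff_adj.2 hadj.symm] at h1
    omega
  have hux_ge : G.dist v x ≤ G.dist u x := panel_nbr_ge hc hTC hxz hv hadj hu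
  have hlow : G.dist v a ≤ G.dist u a + 1 := by
    have h1 : G.dist v a ≤ G.dist v u + G.dist u a := hc.dist_triangle
    rw [SimpleGraph.dist_eq_one_iff_adj.2 hadj] at h1
    omega
  have hgate : ∀ w ∈ panelFiber G z x, G.dist a w = G.dist w x + G.dist x a := by
    intro w hw
    have h1 := panel_dists hc hTC hxz hw a haN
    rw [SimpleGraph.dist_comm (u := a) (v := w)]
    omega
  by_cases hcase : G.dist u a + 1 = G.dist v x + G.dist x a
  · have h1 : G.dist a v = G.dist v x + G.dist x a := by
      rw [SimpleGraph.dist_comm (u := a) (v := v)]; omega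
    have h2 : G.dist a u + 1 = G.dist v x + G.dist x a := by
      rw [SimpleGraph.dist_comm (u := a) (v := u)]; omega
    exact ⟨a, u, G.dist x a, hδ1, hadj, hu, h1, h2, hgate⟩
  · -- here δ = 1 and dist u a = dist u x = dist v x + 1
    have hδeq : G.dist x a = 1 := by omega
    have huaeq : G.dist u a = G.dist v x + 1 := by omega
    have huxeq : G.dist u x = G.dist v x + 1 := by omega
    have hav : G.dist a v = G.dist v x + 1 := by
      rw [SimpleGraph.dist_comm (u := a) (v := v)]; omega
    have hau : G.dist a u = G.dist v x + 1 := by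
      rw [SimpleGraph.dist_comm (u := a) (v := u)]; omega
    obtain ⟨s, hsd, hsv, hsu⟩ := hTC (G.dist v x) a v u hav hau hadj
    have hsP : s ∉ panelFiber G z x := by
      intro hs
      have h1 : G.dist s a = G.dist s x + 1 := by
        have := panel_dists hc hTC hxz hs a haN; omega
      have h2 : G.dist u x ≤ G.dist u s + G.dist s x := hc.dist_triangle
      rw [SimpleGraph.dist_eq_one_iff_adj.2 hsu.symm] at h2
      rw [SimpleGraph.dist_comm (u := a) (v := s)] at hsd
      omega
    have hgate1 : ∀ w ∈ panelFiber G z x, G.dist a w = G.dist w x + 1 := by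
      intro w hw
      have := hgate w hw
      omega
    exact ⟨a, s, 1, le_refl 1, hsv.symm, hsP, by omega, by omega, hgate1⟩

section Cone

variable {z x y y' : V}

/-- Any common neighbour of `x` and `z` is `y` or `y'`. -/
private lemma cone_pair (hC4 : NoInducedC4 G) (hk4 : K4Free G)
    (hnxz : ¬ G.Adj x z) (hxz : x ≠ z) (hyy' : G.Adj y y') (hzy : G.Adj z y)
    (hzy' : G.Adj z y') (hxy : G.Adj x y) (hxy' : G.Adj x y') {t : V}
    (hzt : G.Adj z t) (hxt : G.Adj x t) : t = y ∨ t = y' := by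
  by_contra hno
  push_neg at hno
  obtain ⟨hty, hty'⟩ := hno
  have h1 : G.Adj t y := by
    by_contra hn
    exact hC4 ⟨x, t, z, y, hxt, hzt.symm, hzy, hxy.symm, hxz, hty, hnxz, hn⟩
  have h2 : G.Adj t y' := by
    by_contra hn
    exact hC4 ⟨x, t, z, y', hxt, hzt.symm, hzy', hxy'.symm, hxz, hty', hnxz, hn⟩
  exact hk4 ⟨z, t, y, y', hzt, hzy, hzy', h1, h2, hyy'⟩

private lemma cone_mem (hc : G.Connected) (hC4 : NoInducedC4 G) (hk4 : K4Free G)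
    (hnxz : ¬ G.Adj x z) (hxz : x ≠ z) (hyy' : G.Adj y y') (hzy : G.Adj z y)
    (hzy' : G.Adj z y') (hxy : G.Adj x y) (hxy' : G.Adj x y') {u : V} :
    u ∈ coneFiber G z x ↔
      (mproj G u (closedNbhd G z) = {y, y'} ∧ G.dist u x + 1 = G.dist u y) := by
  constructor
  · rintro ⟨w₁, w₂, h12, hw12, hzw1, hzw2, hxw1, hxw2, hm, hd⟩
    have hyN : y ∈ closedNbhd G z := mem_closedNbhd.2 (Or.inr hzy)
    have hy'N : y' ∈ closedNbhd G z := mem_closedNbhd.2 (Or.inr hzy')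
    have c1 := cone_pair hC4 hk4 hnxz hxz hyy' hzy hzy' hxy hxy' hzw1 hxw1
    have c2 := cone_pair hC4 hk4 hnxz hxz hyy' hzy hzy' hxy hxy' hzw2 hxw2
    have hpair : mproj G u (closedNbhd G z) = {y, y'} := by
      rcases c1 with rfl | rfl <;> rcases c2 with rfl | rfl
      · exact absurd rfl h12
      · exact hm
      · rw [hm, Set.pair_comm]
      · exact absurd rfl h12
    refine ⟨hpair, ?_⟩
    have hy_mem : y ∈ mproj G u (closedNbhd G z) := by
      rw [hpair]; exact Set.mem_insert _ _
    have hy'_mem : y' ∈ mproj G u (closedNbhd G z) := by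
      rw [hpair]; exact Set.mem_insert_of_mem _ rfl
    have heq : G.dist u y = G.dist u y' :=
      le_antisymm (hy_mem.2 y' hy'N) (hy'_mem.2 y hyN)
    rcases c1 with rfl | rfl
    · exact hd
    · omega
  · rintro ⟨hm, hd⟩
    exact ⟨y, y', hyy'.ne, hyy', hzy, hzy', hxy, hxy', hm, hd⟩

private lemma cone_dists (hc : G.Connected) (hC4 : NoInducedC4 G) (hk4 : K4Free G)
    (hnxz : ¬ G.Adj x z) (hxz : x ≠ z) (hyy' : G.Adj y y') (hzy : G.Adj z y)
    (hzy' : G.Adj z y') (hxy : G.Adj x y) (hxy' : G.Adj x y') {v : V}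
    (hv : v ∈ coneFiber G z x) :
    G.dist v y = G.dist v x + 1 ∧ G.dist v y' = G.dist v x + 1 ∧
      G.dist v z = G.dist v x + 2 ∧
      ∀ a ∈ closedNbhd G z, a ≠ y → a ≠ y' → G.dist v x + 2 ≤ G.dist v a := by
  obtain ⟨hm, hd⟩ := (cone_mem hc hC4 hk4 hnxz hxz hyy' hzy hzy' hxy hxy').1 hv
  have hyN : y ∈ closedNbhd G z := mem_closedNbhd.2 (Or.inr hzy)
  have hy'N : y' ∈ closedNbhd G z := mem_closedNbhd.2 (Or.inr hzy')
  have hzN : z ∈ closedNbhd G z := mem_closedNbhd.2 (Or.inl rfl)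
  have hy_mem : y ∈ mproj G v (closedNbhd G z) := by
    rw [hm]; exact Set.mem_insert _ _
  have hy'_mem : y' ∈ mproj G v (closedNbhd G z) := by
    rw [hm]; exact Set.mem_insert_of_mem _ rfl
  have heq : G.dist v y = G.dist v y' :=
    le_antisymm (hy_mem.2 y' hy'N) (hy'_mem.2 y hyN)
  have hother : ∀ a ∈ closedNbhd G z, a ≠ y → a ≠ y' → G.dist v x + 2 ≤ G.dist v a := by
    intro a haN hay hay'
    have hnm : a ∉ mproj G v (closedNbhd G z) := by
      rw [hm]
      simp only [Set.mem_insert_iff, Set.mem_singleton_iff]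
      tauto
    have hnot : ¬ ∀ b ∈ closedNbhd G z, G.dist v a ≤ G.dist v b :=
      fun hall => hnm ⟨haN, hall⟩
    push_neg at hnot
    obtain ⟨b, hbN, hblt⟩ := hnot
    have := hy_mem.2 b hbN
    omega
  have hzy_ne : z ≠ y := hzy.ne
  have hzy'_ne : z ≠ y' := hzy'.ne
  have hvz_le : G.dist v z ≤ G.dist v y + 1 := by
    have h1 : G.dist v z ≤ G.dist v y + G.dist y z := hc.dist_triangle
    rw [SimpleGraph.dist_eq_one_iff_adj.2 hzy.symm] at h1
    exact h1
  have hvz := hother z hzN hzy_ne hzy'_ne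
  exact ⟨by omega, by omega, by omega, hother⟩

private lemma cone_conv (hc : G.Connected) (hC4 : NoInducedC4 G) (hk4 : K4Free G)
    (hnxz : ¬ G.Adj x z) (hxz : x ≠ z) (hyy' : G.Adj y y') (hzy : G.Adj z y)
    (hzy' : G.Adj z y') (hxy : G.Adj x y) (hxy' : G.Adj x y') {v w : V}
    (hv : v ∈ coneFiber G z x) (hw : G.dist v w + G.dist w x = G.dist v x) :
    w ∈ coneFiber G z x := by
  obtain ⟨hvy, hvy', hvz, hvo⟩ :=
    cone_dists hc hC4 hk4 hnxz hxz hyy' hzy hzy' hxy hxy' hv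
  have hyN : y ∈ closedNbhd G z := mem_closedNbhd.2 (Or.inr hzy)
  have hy'N : y' ∈ closedNbhd G z := mem_closedNbhd.2 (Or.inr hzy')
  have hwy : G.dist w y = G.dist w x + 1 := by
    have h1 : G.dist w y ≤ G.dist w x + G.dist x y := hc.dist_triangle
    rw [SimpleGraph.dist_eq_one_iff_adj.2 hxy] at h1
    have h2 : G.dist v y ≤ G.dist v w + G.dist w y := hc.dist_triangle
    omega
  have hwy' : G.dist w y' = G.dist w x + 1 := by
    have h1 : G.dist w y' ≤ G.dist w x + G.dist x y' := hc.dist_triangle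
    rw [SimpleGraph.dist_eq_one_iff_adj.2 hxy'] at h1
    have h2 : G.dist v y' ≤ G.dist v w + G.dist w y' := hc.dist_triangle
    omega
  have hwo : ∀ a ∈ closedNbhd G z, a ≠ y → a ≠ y' → G.dist w x + 2 ≤ G.dist w a := by
    intro a haN hay hay'
    have h1 := hvo a haN hay hay'
    have h2 : G.dist v a ≤ G.dist v w + G.dist w a := hc.dist_triangle
    omega
  apply (cone_mem hc hC4 hk4 hnxz hxz hyy' hzy hzy' hxy hxy').2
  refine ⟨?_, by omega⟩
  ext a
  simp only [Set.mem_insert_iff, Set.mem_singleton_iff]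
  constructor
  · rintro ⟨haN, hamin⟩
    by_contra hno
    push_neg at hno
    have := hwo a haN hno.1 hno.2
    have := hamin y hyN
    omega
  · intro h
    have hmin : ∀ b ∈ closedNbhd G z, G.dist w x + 1 ≤ G.dist w b := by
      intro b hbN
      by_cases hby : b = y
      · rw [hby]; omega
      by_cases hby' : b = y'
      · rw [hby']; omega
      · have := hwo b hbN hby hby'
        omega
    rcases h with rfl | rfl
    · exact ⟨hyN, fun b hb => by rw [hwy]; exact hmin b hb⟩
    · exact ⟨hy'N, fun b hb => by rw [hwy']; exact hmin b hb⟩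

private lemma cone_nbr_ge (hc : G.Connected) (hC4 : NoInducedC4 G) (hk4 : K4Free G)
    (hnxz : ¬ G.Adj x z) (hxz : x ≠ z) (hyy' : G.Adj y y') (hzy : G.Adj z y)
    (hzy' : G.Adj z y') (hxy : G.Adj x y) (hxy' : G.Adj x y') {v u : V}
    (hv : v ∈ coneFiber G z x) (hadj : G.Adj v u) (hu : u ∉ coneFiber G z x) :
    G.dist v x ≤ G.dist u x := by
  by_contra hlt
  push_neg at hlt
  obtain ⟨hvy, hvy', hvz, hvo⟩ :=
    cone_dists hc hC4 hk4 hnxz hxz hyy' hzy hzy' hxy hxy' hv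
  have hd1 : G.dist v u = 1 := SimpleGraph.dist_eq_one_iff_adj.2 hadj
  have hvux : G.dist v x ≤ G.dist v u + G.dist u x := hc.dist_triangle
  have hux : G.dist u x + 1 = G.dist v x := by omega
  have hyN : y ∈ closedNbhd G z := mem_closedNbhd.2 (Or.inr hzy)
  have hy'N : y' ∈ closedNbhd G z := mem_closedNbhd.2 (Or.inr hzy')
  have huy : G.dist u y = G.dist u x + 1 := by
    have h1 : G.dist u y ≤ G.dist u x + G.dist x y := hc.dist_triangle
    rw [SimpleGraph.dist_eq_one_iff_adj.2 hxy] at h1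
    have h2 : G.dist v y ≤ G.dist v u + G.dist u y := hc.dist_triangle
    omega
  have huy' : G.dist u y' = G.dist u x + 1 := by
    have h1 : G.dist u y' ≤ G.dist u x + G.dist x y' := hc.dist_triangle
    rw [SimpleGraph.dist_eq_one_iff_adj.2 hxy'] at h1
    have h2 : G.dist v y' ≤ G.dist v u + G.dist u y' := hc.dist_triangle
    omega
  have huo : ∀ a ∈ closedNbhd G z, a ≠ y → a ≠ y' → G.dist u x + 2 ≤ G.dist u a := by
    intro a haN hay hay'
    have h1 := hvo a haN hay hay'
    have h2 : G.dist v a ≤ G.dist v u + G.dist u a := hc.dist_triangle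
    omega
  apply hu
  apply (cone_mem hc hC4 hk4 hnxz hxz hyy' hzy hzy' hxy hxy').2
  refine ⟨?_, by omega⟩
  ext a
  simp only [Set.mem_insert_iff, Set.mem_singleton_iff]
  constructor
  · rintro ⟨haN, hamin⟩
    by_contra hno
    push_neg at hno
    have := huo a haN hno.1 hno.2
    have := hamin y hyN
    omega
  · intro h
    have hmin : ∀ b ∈ closedNbhd G z, G.dist u x + 1 ≤ G.dist u b := by
      intro b hbN
      by_cases hby : b = y
      · rw [hby]; omega
      by_cases hby' : b = y'
      · rw [hby']; omega
      · have := huo b hbN hby hby'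
        omega
    rcases h with rfl | rfl
    · exact ⟨hyN, fun b hb => by rw [huy]; exact hmin b hb⟩
    · exact ⟨hy'N, fun b hb => by rw [huy']; exact hmin b hb⟩

/-- If `u` is outside the cone but `y`, `y'` minimize its distance to `N[z]`, the
metric projection of `u` must contain a third vertex, forcing a `K₄`. -/
private lemma cone_impossible (hc : G.Connected) (hTC : TriangleCondition G)
    (hQC : QuadrangleCondition G) (hC4 : NoInducedC4 G) (hk4 : K4Free G)
    (hnxz : ¬ G.Adj x z) (hxz : x ≠ z) (hyy' : G.Adj y y') (hzy : G.Adj z y)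
    (hzy' : G.Adj z y') (hxy : G.Adj x y) (hxy' : G.Adj x y') {u : V}
    (hu : u ∉ coneFiber G z x) (hM : G.dist u y = G.dist u x + 1)
    (hM' : G.dist u y' = G.dist u y) (hz : G.dist u z = G.dist u y + 1)
    (hothers : ∀ b ∈ closedNbhd G z, G.dist u y ≤ G.dist u b) : False := by
  have hyN : y ∈ closedNbhd G z := mem_closedNbhd.2 (Or.inr hzy)
  have hy'N : y' ∈ closedNbhd G z := mem_closedNbhd.2 (Or.inr hzy')
  have hy_mem : y ∈ mproj G u (closedNbhd G z) := ⟨hyN, hothers⟩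
  have hy'_mem : y' ∈ mproj G u (closedNbhd G z) :=
    ⟨hy'N, fun b hb => by rw [hM']; exact hothers b hb⟩
  have hnotpair : mproj G u (closedNbhd G z) ≠ {y, y'} := by
    intro hpair
    exact hu ((cone_mem hc hC4 hk4 hnxz hxz hyy' hzy hzy' hxy hxy').2
      ⟨hpair, by omega⟩)
  obtain ⟨a, hamem, hay, hay'⟩ :
      ∃ a, a ∈ mproj G u (closedNbhd G z) ∧ a ≠ y ∧ a ≠ y' := by
    by_contra hno
    push_neg at hno
    apply hnotpair
    ext b
    simp only [Set.mem_insert_iff, Set.mem_singleton_iff]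
    constructor
    · intro hb
      by_cases h1 : b = y
      · exact Or.inl h1
      · exact Or.inr (hno b hb h1)
    · rintro (rfl | rfl)
      · exact hy_mem
      · exact hy'_mem
  have haz : a ≠ z := by
    intro h
    have h1 := hamem.2 y hyN
    rw [h] at h1
    omega
  have hza : G.Adj z a := (mem_closedNbhd.1 hamem.1).resolve_left haz
  have h1 : G.Adj a y := mproj_clique hc hTC hQC hC4 hamem hy_mem hay
  have h2 : G.Adj a y' := mproj_clique hc hTC hQC hC4 hamem hy'_mem hay'
  exact hk4 ⟨z, a, y, y', hza, hzy, hzy', h1, h2, hyy'⟩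

private lemma cert_cone (hc : G.Connected) (hTC : TriangleCondition G)
    (hQC : QuadrangleCondition G) (hC4 : NoInducedC4 G) (hk4 : K4Free G)
    (hnxz : ¬ G.Adj x z) (hxz : x ≠ z) (hyy' : G.Adj y y') (hzy : G.Adj z y)
    (hzy' : G.Adj z y') (hxy : G.Adj x y) (hxy' : G.Adj x y') {v u : V}
    (hv : v ∈ coneFiber G z x) (hadj : G.Adj v u) (hu : u ∉ coneFiber G z x) :
    ∃ a s c, 1 ≤ c ∧ G.Adj v s ∧ s ∉ coneFiber G z x ∧
      G.dist a v = G.dist v x + c ∧ G.dist a s + 1 = G.dist v x + c ∧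
      ∀ w ∈ coneFiber G z x, G.dist a w = G.dist w x + c := by
  obtain ⟨hvy, hvy', hvz, hvo⟩ :=
    cone_dists hc hC4 hk4 hnxz hxz hyy' hzy hzy' hxy hxy' hv
  set k := G.dist v x with hk
  have hyN : y ∈ closedNbhd G z := mem_closedNbhd.2 (Or.inr hzy)
  have hy'N : y' ∈ closedNbhd G z := mem_closedNbhd.2 (Or.inr hzy')
  have hzN : z ∈ closedNbhd G z := mem_closedNbhd.2 (Or.inl rfl)
  have hgy : ∀ w ∈ coneFiber G z x, G.dist y w = G.dist w x + 1 := by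
    intro w hw
    have := (cone_dists hc hC4 hk4 hnxz hxz hyy' hzy hzy' hxy hxy' hw).1
    rw [SimpleGraph.dist_comm (u := y) (v := w)]; omega
  have hgy' : ∀ w ∈ coneFiber G z x, G.dist y' w = G.dist w x + 1 := by
    intro w hw
    have := (cone_dists hc hC4 hk4 hnxz hxz hyy' hzy hzy' hxy hxy' hw).2.1
    rw [SimpleGraph.dist_comm (u := y') (v := w)]; omega
  have hgz : ∀ w ∈ coneFiber G z x, G.dist z w = G.dist w x + 2 := by
    intro w hw
    have := (cone_dists hc hC4 hk4 hnxz hxz hyy' hzy hzy' hxy hxy' hw).2.2.1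
    rw [SimpleGraph.dist_comm (u := z) (v := w)]; omega
  have hd1 : G.dist v u = 1 := SimpleGraph.dist_eq_one_iff_adj.2 hadj
  have hp_ge : k ≤ G.dist u x :=
    cone_nbr_ge hc hC4 hk4 hnxz hxz hyy' hzy hzy' hxy hxy' hv hadj hu
  have hp_le : G.dist u x ≤ k + 1 := by
    have h1 : G.dist u x ≤ G.dist u v + G.dist v x := hc.dist_triangle
    rw [SimpleGraph.dist_comm (u := u) (v := v)] at h1
    omega
  have huy_ge : k ≤ G.dist u y := by
    have h2 : G.dist v y ≤ G.dist v u + G.dist u y := hc.dist_triangle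
    omega
  have huy'_ge : k ≤ G.dist u y' := by
    have h2 : G.dist v y' ≤ G.dist v u + G.dist u y' := hc.dist_triangle
    omega
  have huz_ge : k + 1 ≤ G.dist u z := by
    have h2 : G.dist v z ≤ G.dist v u + G.dist u z := hc.dist_triangle
    omega
  have huz_le : G.dist u z ≤ G.dist v x + 3 := by
    have h2 : G.dist u z ≤ G.dist u v + G.dist v z := hc.dist_triangle
    rw [SimpleGraph.dist_comm (u := u) (v := v)] at h2
    omega
  have huy_le : G.dist u y ≤ G.dist u x + 1 := by
    have h1 : G.dist u y ≤ G.dist u x + G.dist x y := hc.dist_triangle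
    rw [SimpleGraph.dist_eq_one_iff_adj.2 hxy] at h1
    omega
  have huy'_le : G.dist u y' ≤ G.dist u x + 1 := by
    have h1 : G.dist u y' ≤ G.dist u x + G.dist x y' := hc.dist_triangle
    rw [SimpleGraph.dist_eq_one_iff_adj.2 hxy'] at h1
    omega
  have huz_le' : G.dist u z ≤ G.dist u y + 1 := by
    have h1 : G.dist u z ≤ G.dist u y + G.dist y z := hc.dist_triangle
    rw [SimpleGraph.dist_eq_one_iff_adj.2 hzy.symm] at h1
    omega
  by_cases c1 : G.dist u y = k
  · refine ⟨y, u, 1, le_refl 1, hadj, hu, ?_, ?_, hgy⟩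
    · rw [SimpleGraph.dist_comm (u := y) (v := v)]; omega
    · rw [SimpleGraph.dist_comm (u := y) (v := u)]; omega
  by_cases c2 : G.dist u y' = k
  · refine ⟨y', u, 1, le_refl 1, hadj, hu, ?_, ?_, hgy'⟩
    · rw [SimpleGraph.dist_comm (u := y') (v := v)]; omega
    · rw [SimpleGraph.dist_comm (u := y') (v := u)]; omega
  by_cases c3 : G.dist u z = k + 1
  · refine ⟨z, u, 2, by omega, hadj, hu, ?_, ?_, hgz⟩
    · rw [SimpleGraph.dist_comm (u := z) (v := v)]; omega
    · rw [SimpleGraph.dist_comm (u := z) (v := u)]; omega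
  by_cases hp : G.dist u x = k + 1
  · -- x-distance of u is k+1
    by_cases c4 : G.dist u y = k + 1
    · have hav : G.dist y v = k + 1 := by
        rw [SimpleGraph.dist_comm (u := y) (v := v)]; omega
      have hau : G.dist y u = k + 1 := by
        rw [SimpleGraph.dist_comm (u := y) (v := u)]; omega
      obtain ⟨s, hsd, hsv, hsu⟩ := hTC k y v u hav hau hadj
      have hsC : s ∉ coneFiber G z x := by
        intro hs
        have h1 := hgy s hs
        have h2 : G.dist u x ≤ G.dist u s + G.dist s x := hc.dist_triangle
        rw [SimpleGraph.dist_eq_one_iff_adj.2 hsu.symm] at h2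
        omega
      exact ⟨y, s, 1, le_refl 1, hsv.symm, hsC, hav, by omega, hgy⟩
    by_cases c5 : G.dist u y' = k + 1
    · have hav : G.dist y' v = k + 1 := by
        rw [SimpleGraph.dist_comm (u := y') (v := v)]; omega
      have hau : G.dist y' u = k + 1 := by
        rw [SimpleGraph.dist_comm (u := y') (v := u)]; omega
      obtain ⟨s, hsd, hsv, hsu⟩ := hTC k y' v u hav hau hadj
      have hsC : s ∉ coneFiber G z x := by
        intro hs
        have h1 := hgy' s hs
        have h2 : G.dist u x ≤ G.dist u s + G.dist s x := hc.dist_triangle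
        rw [SimpleGraph.dist_eq_one_iff_adj.2 hsu.symm] at h2
        omega
      exact ⟨y', s, 1, le_refl 1, hsv.symm, hsC, hav, by omega, hgy'⟩
    by_cases c6 : G.dist u z = k + 2
    · have hav : G.dist z v = k + 2 := by
        rw [SimpleGraph.dist_comm (u := z) (v := v)]; omega
      have hau : G.dist z u = k + 2 := by
        rw [SimpleGraph.dist_comm (u := z) (v := u)]; omega
      obtain ⟨s, hsd, hsv, hsu⟩ := hTC (k + 1) z v u hav hau hadj
      have hsC : s ∉ coneFiber G z x := by
        intro hs
        have h1 := hgz s hs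
        have h2 : G.dist u x ≤ G.dist u s + G.dist s x := hc.dist_triangle
        rw [SimpleGraph.dist_eq_one_iff_adj.2 hsu.symm] at h2
        omega
      exact ⟨z, s, 2, by omega, hsv.symm, hsC, hav, by omega, hgz⟩
    · -- impossible: metric projection would contain three distinct vertices
      exfalso
      have hy2 : G.dist u y = k + 2 := by omega
      have hy'2 : G.dist u y' = k + 2 := by omega
      have hz3 : G.dist u z = k + 3 := by omega
      have hothers : ∀ b ∈ closedNbhd G z, G.dist u y ≤ G.dist u b := by
        intro b hbN
        by_cases hby : b = y
        · rw [hby]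
        by_cases hby' : b = y'
        · rw [hby']; omega
        by_cases hbz : b = z
        · rw [hbz]; omega
        · have hzb : G.Adj z b := (mem_closedNbhd.1 hbN).resolve_left hbz
          have h1 : G.dist u z ≤ G.dist u b + G.dist b z := hc.dist_triangle
          rw [SimpleGraph.dist_eq_one_iff_adj.2 hzb.symm] at h1
          omega
      exact cone_impossible hc hTC hQC hC4 hk4 hnxz hxz hyy' hzy hzy' hxy hxy'
        hu (by omega) (by omega) (by omega) hothers
  · -- x-distance of u is k
    have hp0 : G.dist u x = k := by omega
    exfalso
    have hy1 : G.dist u y = k + 1 := by omega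
    have hy'1 : G.dist u y' = k + 1 := by omega
    have hz2 : G.dist u z = k + 2 := by omega
    -- every other vertex of N[z] is at distance at least k+1 from u
    have hothers : ∀ b ∈ closedNbhd G z, G.dist u y ≤ G.dist u b := by
      intro b hbN
      by_cases hby : b = y
      · rw [hby]
      by_cases hby' : b = y'
      · rw [hby']; omega
      · have h1 := hvo b hbN hby hby'
        have h2 : G.dist v b ≤ G.dist v u + G.dist u b := hc.dist_triangle
        omega
    exact cone_impossible hc hTC hQC hC4 hk4 hnxz hxz hyy' hzy hzy' hxy hxy'
      hu (by omega) (by omega) (by omega) hothers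

end Cone

end Aux

/-- The total boundary of a fiber is a starshaped tree rooted at the base vertex:
intervals to the base are contained in it and induce single paths. -/
theorem stmt11 (G : SimpleGraph V) (hc : G.Connected) (hb : Bridged G) (hk4 : K4Free G)
    (z x : V) (hx : x ∈ starSet G z) :
    ∀ v ∈ totalBoundary G (fiberSet G z x),
      interval G v x ⊆ totalBoundary G (fiberSet G z x) ∧
      (v ≠ x → ∃! w : V, w ∈ interval G v x ∧ G.Adj v w) := by
  obtain ⟨⟨hTC, hQC⟩, hC4, _hC5⟩ := hb
  by_cases hxz : G.Adj x z
  · rw [fiber_eq_panel hxz]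
    refine main_generic hc hQC hC4 hk4 ?_ ?_
    · -- convexity of the panel
      intro v hv w hw
      apply panel_of_dists hc hxz
      intro a haN
      have h1 := panel_dists hc hTC hxz hv a haN
      have h2 : G.dist w a ≤ G.dist w x + G.dist x a := hc.dist_triangle
      have h3 : G.dist v a ≤ G.dist v w + G.dist w a := hc.dist_triangle
      omega
    · exact fun v hv u hadj hu => cert_panel hc hTC hxz hv hadj hu
  · rw [fiber_eq_cone hxz]
    by_cases hxe : x = z
    · -- the cone over `z` itself is empty
      subst hxe
      rintro v ⟨hvC, -⟩
      exfalso
      obtain ⟨y, y', hne, hyy', hzy, hzy', hxy, hxy', hm, hd⟩ := hvC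
      have hy_mem : y ∈ mproj G v (closedNbhd G x) := by
        rw [hm]; exact Set.mem_insert _ _
      have hzN : x ∈ closedNbhd G x := mem_closedNbhd.2 (Or.inl rfl)
      have := hy_mem.2 x hzN
      omega
    · obtain ⟨y, y', hyy', hzy, hzy', hxy, hxy'⟩ :
          ∃ y y', G.Adj y y' ∧ G.Adj z y ∧ G.Adj z y' ∧ G.Adj x y ∧ G.Adj x y' := by
        rcases hx with h | h
        · rcases mem_closedNbhd.1 h with h1 | h1
          · exact absurd h1 hxe
          · exact absurd h1.symm hxz
        · exact h.2
      refine main_generic hc hQC hC4 hk4 ?_ ?_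
      · exact fun v hv w hw =>
          cone_conv hc hC4 hk4 hxz hxe hyy' hzy hzy' hxy hxy' hv hw
      · exact fun v hv u hadj hu =>
          cert_cone hc hTC hQC hC4 hk4 hxz hxe hyy' hzy hzy' hxy hxy' hv hadj hu
end
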